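/- arXiv:math-ph/0412096 — 5 statements merged into one kernel-verified Lean document; each statement's English description precedes it below -/
import Mathlib

section
/- Let B : ℝ³ → ℝ³ be a continuous magnetic field of medium decay satisfying |B(x)| ≤ C(1+|x|)^{−μ} for all x, with μ > 3/2. Define the transversal gauge vector potential A(x) := −x × ∫₀¹ s·B(s·x) ds. Then A is continuous, x·A(x) = 0 for all x, and there is a constant C′ such that for |x| ≥ 2: |A(x)| ≤ C′|x|^{−1} if μ > 2, |A(x)| ≤ C′|x|^{−1}·log|x| if μ = 2, and |A(x)| ≤ C′|x|^{−(μ−1)} if 3/2 < μ < 2. In particular A is a vector potential of medium range. -/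
open MeasureTheory Filter Topology
open scoped ENNReal

noncomputable section

abbrev E3 := EuclideanSpace ℝ (Fin 3)

/-- Euclidean dot product on `ℝ³`. -/
def dot3 (a b : E3) : ℝ := @inner ℝ _ _ a b

/-- Cross product on `ℝ³`. -/
def cross3 (a b : E3) : E3 :=
  WithLp.toLp 2 ![a 1 * b 2 - a 2 * b 1, a 2 * b 0 - a 0 * b 2, a 0 * b 1 - a 1 * b 0]

/-- `∂ᵢ fₖ (x)` for a map `f : ℝ³ → ℝ³`. -/
def pderiv3 (f : E3 → E3) (i k : Fin 3) (x : E3) : ℝ :=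
  fderiv ℝ f x (EuclideanSpace.single i 1) k

/-- Pointwise (classical) curl of a map `ℝ³ → ℝ³`. -/
def curl3 (f : E3 → E3) (x : E3) : E3 :=
  WithLp.toLp 2 ![pderiv3 f 1 2 x - pderiv3 f 2 1 x,
    pderiv3 f 2 0 x - pderiv3 f 0 2 x,
    pderiv3 f 0 1 x - pderiv3 f 1 0 x]

/-- The longitudinal component of `A` decays integrably:
`∫₀^∞ sup { |A(x)·x|/|x| : |x| ≥ r } dr < ∞`. -/
def LongitudinalIntegrableDecay (A : E3 → E3) : Prop :=
  (∫⁻ r in Set.Ioi (0:ℝ),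
    ⨆ x ∈ {x : E3 | r ≤ ‖x‖}, ENNReal.ofReal (|dot3 (A x) x| / ‖x‖)) < ⊤

/-- A vector potential of medium range. -/
def IsMediumRange (A : E3 → E3) : Prop :=
  Continuous A ∧
  (∃ C > (0:ℝ), ∃ μ : ℝ, 1/2 < μ ∧ ∃ R : ℝ, ∀ x : E3, R ≤ ‖x‖ → ‖A x‖ ≤ C * ‖x‖ ^ (-μ)) ∧
  LongitudinalIntegrableDecay A

/-- `div B = 0` in the sense of tempered distributions. -/
def DivFreeS' (B : E3 → E3) : Prop :=
  ∀ φ : SchwartzMap E3 ℝ, ∫ x, fderiv ℝ (⇑φ) x (B x) = 0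

/-- A magnetic field of medium decay on `ℝ³`. -/
def IsMediumDecay (B : E3 → E3) : Prop :=
  (∃ p : ℝ, 3 < p ∧ MemLp B (ENNReal.ofReal p) volume) ∧
  (∃ C > (0:ℝ), ∃ μ : ℝ, 3/2 < μ ∧ ∃ R : ℝ, ∀ x : E3, R ≤ ‖x‖ → ‖B x‖ ≤ C * ‖x‖ ^ (-μ)) ∧
  DivFreeS' B

/-- `curl A = B` in the sense of tempered distributions. -/
def CurlEqS' (A B : E3 → E3) : Prop :=
  ∀ φ : SchwartzMap E3 E3, (∫ x, dot3 (A x) (curl3 (⇑φ) x)) = ∫ x, dot3 (B x) (φ x)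

/-- The transversal gauge vector potential. -/
def transversalGauge (B : E3 → E3) : E3 → E3 :=
  fun x => -cross3 x (∫ s in (0:ℝ)..1, s • B (s • x))


/-! The potential `A(x) = -x × ∫₀¹ s B(sx) ds` is orthogonal to `x`, so its longitudinal part
vanishes. Since `|x × v| ≤ |x| |v|` and `s|x| ≤ 1 + s|x|`, the bound on `B` gives
`|A(x)| ≤ C ∫₀¹ (1 + s|x|)^{1-μ} ds = C |x|⁻¹ ∫₁^{1+|x|} t^{1-μ} dt`, an explicit integral that is
`O(|x|⁻¹)`, `O(|x|⁻¹ log |x|)` or `O(|x|^{1-μ})` according as `μ > 2`, `μ = 2` or `μ < 2`; in each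
case this is `O(|x|^{-ν})` for some `ν > 1/2` because `μ > 3/2`. -/

lemma nonneg_of_forall_norm_le_mul_rpow {E F : Type*} [NormedAddCommGroup E]
    [NormedAddCommGroup F] {f : E → F} {C μ : ℝ}
    (hf : ∀ x, ‖f x‖ ≤ C * (1 + ‖x‖) ^ (-μ)) : 0 ≤ C := by
  simpa using (norm_nonneg _).trans (hf 0)

lemma dot3_cross3_self (a b : E3) : dot3 a (cross3 a b) = 0 := by
  simp only [dot3, cross3, PiLp.inner_apply, RCLike.inner_apply, conj_trivial, Fin.sum_univ_three,
    Matrix.cons_val_zero, Matrix.cons_val_one, Matrix.cons_val]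
  ring

lemma norm_cross3_sq_add_dot3_sq (a b : E3) :
    ‖cross3 a b‖ ^ 2 + dot3 a b ^ 2 = ‖a‖ ^ 2 * ‖b‖ ^ 2 := by
  simp only [EuclideanSpace.norm_sq_eq, dot3, cross3, PiLp.inner_apply, RCLike.inner_apply,
    conj_trivial, Fin.sum_univ_three, Real.norm_eq_abs, sq_abs, Matrix.cons_val_zero,
    Matrix.cons_val_one, Matrix.cons_val]
  ring

lemma norm_cross3_le (a b : E3) : ‖cross3 a b‖ ≤ ‖a‖ * ‖b‖ := by
  have h := norm_cross3_sq_add_dot3_sq a b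
  refine (pow_le_pow_iff_left₀ (norm_nonneg _) (by positivity) two_ne_zero).1 ?_
  nlinarith [sq_nonneg (dot3 a b)]

lemma continuous_cross3 {X : Type*} [TopologicalSpace X] {f g : X → E3}
    (hf : Continuous f) (hg : Continuous g) : Continuous fun x => cross3 (f x) (g x) := by
  unfold cross3
  fun_prop

lemma continuous_transversalGauge {B : E3 → E3} (hB : Continuous B) :
    Continuous (transversalGauge B) := by
  have hint : Continuous fun x : E3 => ∫ s in (0:ℝ)..1, s • B (s • x) :=
    intervalIntegral.continuous_parametric_intervalIntegral_of_continuous' (by fun_prop) 0 1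
  exact (continuous_cross3 continuous_id hint).neg

lemma dot3_transversalGauge (B : E3 → E3) (x : E3) : dot3 x (transversalGauge B x) = 0 := by
  simp only [dot3, transversalGauge, inner_neg_right]
  rw [← dot3, dot3_cross3_self, neg_zero]

lemma mul_rpow_neg_le_rpow_one_sub {t : ℝ} (ht : 0 ≤ t) (μ : ℝ) :
    t * (1 + t) ^ (-μ) ≤ (1 + t) ^ (1 - μ) := by
  rw [sub_eq_add_neg, Real.rpow_add (by linarith), Real.rpow_one]
  gcongr
  linarith

def gaugeMajorant (μ r : ℝ) : ℝ := ∫ s in (0:ℝ)..1, (1 + s * r) ^ (1 - μ)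

lemma norm_transversalGauge_le {B : E3 → E3} {C μ : ℝ}
    (hbd : ∀ x : E3, ‖B x‖ ≤ C * (1 + ‖x‖) ^ (-μ)) (x : E3) :
    ‖transversalGauge B x‖ ≤ C * gaugeMajorant μ ‖x‖ := by
  have hC : 0 ≤ C := nonneg_of_forall_norm_le_mul_rpow hbd
  have hpt : ∀ s ∈ Set.Ioc (0:ℝ) 1, ‖‖x‖ • s • B (s • x)‖ ≤ C * (1 + s * ‖x‖) ^ (1 - μ) := by
    intro s hs
    have hs0 : 0 ≤ s := hs.1.le
    have hnorm : ‖s • x‖ = s * ‖x‖ := by rw [norm_smul, Real.norm_of_nonneg hs0]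
    calc ‖‖x‖ • s • B (s • x)‖ = s * ‖x‖ * ‖B (s • x)‖ := by
          rw [norm_smul, norm_smul, norm_norm, Real.norm_of_nonneg hs0]; ring
      _ ≤ s * ‖x‖ * (C * (1 + s * ‖x‖) ^ (-μ)) := by
          gcongr; simpa [hnorm] using hbd (s • x)
      _ = C * (s * ‖x‖ * (1 + s * ‖x‖) ^ (-μ)) := by ring
      _ ≤ C * (1 + s * ‖x‖) ^ (1 - μ) := by
          gcongr; exact mul_rpow_neg_le_rpow_one_sub (by positivity) μ
  have hint : IntervalIntegrable (fun s : ℝ => C * (1 + s * ‖x‖) ^ (1 - μ)) volume 0 1 := by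
    refine ContinuousOn.intervalIntegrable ?_
    refine continuousOn_const.mul (ContinuousOn.rpow_const (by fun_prop) fun s hs => Or.inl ?_)
    rw [Set.uIcc_of_le zero_le_one] at hs
    nlinarith [hs.1, norm_nonneg x]
  calc ‖transversalGauge B x‖ ≤ ‖x‖ * ‖∫ s in (0:ℝ)..1, s • B (s • x)‖ := by
        rw [transversalGauge, norm_neg]; exact norm_cross3_le _ _
    _ = ‖∫ s in (0:ℝ)..1, ‖x‖ • s • B (s • x)‖ := by
        rw [intervalIntegral.integral_smul, norm_smul, norm_norm]
    _ ≤ ∫ s in (0:ℝ)..1, C * (1 + s * ‖x‖) ^ (1 - μ) :=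
        intervalIntegral.norm_integral_le_of_norm_le zero_le_one
          (Filter.Eventually.of_forall hpt) hint
    _ = C * gaugeMajorant μ ‖x‖ := intervalIntegral.integral_const_mul _ _

lemma gaugeMajorant_eq_inv_mul_integral (μ : ℝ) {r : ℝ} (hr : r ≠ 0) :
    gaugeMajorant μ r = r⁻¹ * ∫ t in (1:ℝ)..1 + r, t ^ (1 - μ) := by
  have h := intervalIntegral.integral_comp_add_mul (a := 0) (b := 1) (fun t : ℝ => t ^ (1 - μ)) hr 1
  simpa [gaugeMajorant, mul_comm r] using h

lemma gaugeMajorant_eq_of_ne_two {μ r : ℝ} (hμ : μ ≠ 2) (hr : 0 < r) :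
    gaugeMajorant μ r = r⁻¹ * (((1 + r) ^ (2 - μ) - 1) / (2 - μ)) := by
  have h1 : (1 - μ) + 1 = 2 - μ := by ring
  rw [gaugeMajorant_eq_inv_mul_integral μ hr.ne', integral_rpow, h1, Real.one_rpow]
  right
  refine ⟨fun h => hμ (by linarith), fun h0 => ?_⟩
  rw [Set.uIcc_of_le (by linarith)] at h0
  linarith [h0.1]

lemma gaugeMajorant_two {r : ℝ} (hr : 0 < r) : gaugeMajorant 2 r = r⁻¹ * Real.log (1 + r) := by
  rw [gaugeMajorant_eq_inv_mul_integral 2 hr.ne', show (1:ℝ) - 2 = -1 by norm_num]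
  simp only [Real.rpow_neg_one]
  rw [integral_inv_of_pos one_pos (by linarith), div_one]

lemma gaugeMajorant_le_of_two_lt {μ r : ℝ} (hμ : 2 < μ) (hr : 0 < r) :
    gaugeMajorant μ r ≤ (μ - 2)⁻¹ * r⁻¹ := by
  rw [gaugeMajorant_eq_of_ne_two hμ.ne' hr, mul_comm]
  gcongr
  have hneg : (μ - 2)⁻¹ * (2 - μ) = -1 := by
    rw [← neg_sub 2 μ, inv_neg, neg_mul, inv_mul_cancel₀ (by linarith)]
  rw [div_le_iff_of_neg (by linarith), hneg]
  linarith [Real.rpow_pos_of_pos (by linarith : (0:ℝ) < 1 + r) (2 - μ)]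

lemma gaugeMajorant_two_le {r : ℝ} (hr : 2 ≤ r) :
    gaugeMajorant 2 r ≤ 2 * (r⁻¹ * Real.log r) := by
  have hr0 : 0 < r := by linarith
  have hlog : 2 * Real.log r = Real.log (r ^ 2) := by rw [Real.log_pow]; norm_num
  rw [gaugeMajorant_two hr0, mul_left_comm, hlog]
  gcongr
  nlinarith

lemma gaugeMajorant_le_of_lt_two {μ r : ℝ} (hμ : μ < 2) (hr : 1 ≤ r) :
    gaugeMajorant μ r ≤ 2 ^ (2 - μ) / (2 - μ) * r ^ (1 - μ) := by
  have hr0 : 0 < r := by linarith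
  have h2μ : 0 < 2 - μ := by linarith
  have hpow : r⁻¹ * (2 * r) ^ (2 - μ) = 2 ^ (2 - μ) * r ^ (1 - μ) := by
    rw [Real.mul_rpow zero_le_two hr0.le, mul_left_comm, show 2 - μ = 1 + (1 - μ) by ring,
      Real.rpow_add hr0, Real.rpow_one, inv_mul_cancel_left₀ hr0.ne']
  calc gaugeMajorant μ r = r⁻¹ * (((1 + r) ^ (2 - μ) - 1) / (2 - μ)) :=
        gaugeMajorant_eq_of_ne_two hμ.ne hr0
    _ ≤ r⁻¹ * ((1 + r) ^ (2 - μ) / (2 - μ)) := by gcongr; linarith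
    _ ≤ r⁻¹ * ((2 * r) ^ (2 - μ) / (2 - μ)) := by gcongr; linarith
    _ = 2 ^ (2 - μ) / (2 - μ) * r ^ (1 - μ) := by rw [mul_div_assoc', hpow]; ring

lemma inv_mul_log_le_rpow {r : ℝ} (hr : 0 < r) : r⁻¹ * Real.log r ≤ 4 * r ^ (-(3 / 4 : ℝ)) := by
  have hlog : Real.log r ≤ r ^ (1 / 4 : ℝ) / (1 / 4) := Real.log_le_rpow_div hr.le (by norm_num)
  calc r⁻¹ * Real.log r ≤ r⁻¹ * (r ^ (1 / 4 : ℝ) / (1 / 4)) := by gcongr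
    _ = 4 * (r ^ (-1 : ℝ) * r ^ (1 / 4 : ℝ)) := by rw [Real.rpow_neg_one]; ring
    _ = 4 * r ^ (-(3 / 4 : ℝ)) := by rw [← Real.rpow_add hr]; norm_num

lemma exists_gaugeMajorant_le_rpow {μ : ℝ} (hμ : 3 / 2 < μ) :
    ∃ K ν : ℝ, 1 / 2 < ν ∧ ∀ r : ℝ, 2 ≤ r → gaugeMajorant μ r ≤ K * r ^ (-ν) := by
  rcases lt_trichotomy μ 2 with hμ2 | rfl | hμ2
  · refine ⟨2 ^ (2 - μ) / (2 - μ), μ - 1, by linarith, fun r hr => ?_⟩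
    rw [neg_sub]
    exact gaugeMajorant_le_of_lt_two hμ2 (by linarith)
  · refine ⟨8, 3 / 4, by norm_num, fun r hr => ?_⟩
    calc gaugeMajorant 2 r ≤ 2 * (r⁻¹ * Real.log r) := gaugeMajorant_two_le hr
      _ ≤ 2 * (4 * r ^ (-(3 / 4 : ℝ))) := 
          mul_le_mul_of_nonneg_left (inv_mul_log_le_rpow (by linarith)) zero_le_two
      _ = 8 * r ^ (-(3 / 4 : ℝ)) := by ring
  · refine ⟨(μ - 2)⁻¹, 1, by norm_num, fun r hr => ?_⟩
    rw [Real.rpow_neg_one]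
    exact gaugeMajorant_le_of_two_lt hμ2 (by linarith)

lemma exists_norm_transversalGauge_le {B : E3 → E3} {C μ : ℝ}
    (hbd : ∀ x : E3, ‖B x‖ ≤ C * (1 + ‖x‖) ^ (-μ)) :
    ∃ C' : ℝ, ∀ x : E3, 2 ≤ ‖x‖ →
      (2 < μ → ‖transversalGauge B x‖ ≤ C' * ‖x‖⁻¹) ∧
      (μ = 2 → ‖transversalGauge B x‖ ≤ C' * ‖x‖⁻¹ * Real.log ‖x‖) ∧
      (μ < 2 → ‖transversalGauge B x‖ ≤ C' * ‖x‖ ^ (-(μ - 1))) := by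
  have hC : 0 ≤ C := nonneg_of_forall_norm_le_mul_rpow hbd
  have hA := norm_transversalGauge_le hbd
  rcases lt_trichotomy μ 2 with hμ | rfl | hμ
  · refine ⟨C * (2 ^ (2 - μ) / (2 - μ)), fun x hx =>
      ⟨fun h => absurd h hμ.not_gt, fun h => absurd h hμ.ne, fun _ => ?_⟩⟩
    rw [mul_assoc, neg_sub]
    exact (hA x).trans (mul_le_mul_of_nonneg_left (gaugeMajorant_le_of_lt_two hμ (by linarith)) hC)
  · refine ⟨2 * C, fun x hx =>
      ⟨fun h => absurd h (lt_irrefl 2), fun _ => ?_, fun h => absurd h (lt_irrefl 2)⟩⟩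
    calc ‖transversalGauge B x‖ ≤ C * (2 * (‖x‖⁻¹ * Real.log ‖x‖)) :=
          (hA x).trans (mul_le_mul_of_nonneg_left (gaugeMajorant_two_le hx) hC)
      _ = 2 * C * ‖x‖⁻¹ * Real.log ‖x‖ := by ring
  · refine ⟨C * (μ - 2)⁻¹, fun x hx =>
      ⟨fun _ => ?_, fun h => absurd h hμ.ne', fun h => absurd h hμ.not_gt⟩⟩
    rw [mul_assoc]
    exact (hA x).trans (mul_le_mul_of_nonneg_left (gaugeMajorant_le_of_two_lt hμ (by linarith)) hC)

lemma exists_norm_transversalGauge_le_rpow {B : E3 → E3} {C μ : ℝ} (hμ : 3 / 2 < μ)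
    (hbd : ∀ x : E3, ‖B x‖ ≤ C * (1 + ‖x‖) ^ (-μ)) :
    ∃ K ν : ℝ, 1 / 2 < ν ∧ ∀ x : E3, 2 ≤ ‖x‖ → ‖transversalGauge B x‖ ≤ K * ‖x‖ ^ (-ν) := by
  have hC : 0 ≤ C := nonneg_of_forall_norm_le_mul_rpow hbd
  obtain ⟨K, ν, hν, hK⟩ := exists_gaugeMajorant_le_rpow hμ
  refine ⟨C * K, ν, hν, fun x hx => ?_⟩
  rw [mul_assoc]
  exact (norm_transversalGauge_le hbd x).trans (mul_le_mul_of_nonneg_left (hK _ hx) hC)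

lemma isMediumRange_of_rpow_decay {A : E3 → E3} (hA : Continuous A)
    (horth : ∀ x, dot3 x (A x) = 0) {K ν R : ℝ} (hν : 1 / 2 < ν)
    (hdecay : ∀ x : E3, R ≤ ‖x‖ → ‖A x‖ ≤ K * ‖x‖ ^ (-ν)) : IsMediumRange A := by
  refine ⟨hA, ⟨max K 1, by positivity, ν, hν, R, fun x hx => ?_⟩, ?_⟩
  · exact (hdecay x hx).trans (by gcongr; exact le_max_left _ _)
  · have hlong : ∀ x, dot3 (A x) x = 0 := fun x => (real_inner_comm _ _).trans (horth x)
    simp [LongitudinalIntegrableDecay, hlong]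

theorem statement1_general (B : E3 → E3) (C μ : ℝ) (hμ : 3/2 < μ)
    (hBc : Continuous B)
    (hbd : ∀ x : E3, ‖B x‖ ≤ C * (1 + ‖x‖) ^ (-μ)) :
    Continuous (transversalGauge B) ∧
    (∀ x : E3, dot3 x (transversalGauge B x) = 0) ∧
    (∃ C' : ℝ, ∀ x : E3, 2 ≤ ‖x‖ →
      (2 < μ → ‖transversalGauge B x‖ ≤ C' * ‖x‖⁻¹) ∧
      (μ = 2 → ‖transversalGauge B x‖ ≤ C' * ‖x‖⁻¹ * Real.log ‖x‖) ∧
      (μ < 2 → ‖transversalGauge B x‖ ≤ C' * ‖x‖ ^ (-(μ - 1)))) ∧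
    IsMediumRange (transversalGauge B) := by
  obtain ⟨K, ν, hν, hdecay⟩ := exists_norm_transversalGauge_le_rpow hμ hbd
  exact ⟨continuous_transversalGauge hBc, dot3_transversalGauge B,
    exists_norm_transversalGauge_le hbd,
    isMediumRange_of_rpow_decay (continuous_transversalGauge hBc) (dot3_transversalGauge B) hν
      hdecay⟩

/-- Decay properties of the transversal gauge (Proposition Ptg.1). -/
theorem statement1 (B : E3 → E3) (C μ : ℝ) (hμ : 3/2 < μ)
    (hBc : Continuous B) (hBmd : IsMediumDecay B)
    (hbd : ∀ x : E3, ‖B x‖ ≤ C * (1 + ‖x‖) ^ (-μ)) :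
    Continuous (transversalGauge B) ∧
    (∀ x : E3, dot3 x (transversalGauge B x) = 0) ∧
    (∃ C' : ℝ, ∀ x : E3, 2 ≤ ‖x‖ →
      (2 < μ → ‖transversalGauge B x‖ ≤ C' * ‖x‖⁻¹) ∧
      (μ = 2 → ‖transversalGauge B x‖ ≤ C' * ‖x‖⁻¹ * Real.log ‖x‖) ∧
      (μ < 2 → ‖transversalGauge B x‖ ≤ C' * ‖x‖ ^ (-(μ - 1)))) ∧
    IsMediumRange (transversalGauge B) :=
  statement1_general B C μ hμ hBc hbd
end
end

section
/- Let B : ℝ³ → ℝ³ be a continuous magnetic field of medium decay, and let A(x) := −x × ∫₀¹ s·B(s·x) ds be the transversal gauge vector potential. Then curl A = B in the sense of tempered distributions: for every Schwartz function φ : ℝ³ → ℝ³, ∫_{ℝ³} A·(∇×φ) dx = ∫_{ℝ³} B·φ dx. -/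
open MeasureTheory Filter Topology
open scoped ENNReal

noncomputable section

/-!
For a test field `φ`, the triple product turns `A · curl φ (x)` into
`∫₀¹ s B(s x) · (x × curl φ(x)) ds`, and pointwise
`b · (x × curl φ) = ∇(φ · x) · b - φ · b - b · (Dφ x)`.
Since `div B = 0` also for the rescaled field `B(s ·)`, the gradient term integrates to zero, so
`∫ B(s x) · (x × curl φ(x)) dx = -(K(s) + L(s))` with `K(s) = ∫ B(s x) · φ(x) dx` and `L` the same
pairing with the Euler field `Dφ(x) x`. The field `B` is only continuous, but the substitution
`y = s x` moves the dilation onto `φ` and gives `s K'(s) = -3 K(s) - L(s)`. Hence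
`(s² K)' = -s (K + L)`, and after Fubini the integral over `s ∈ [0, 1]` is `K(1) = ∫ B · φ`.
-/
open SchwartzMap
open scoped RealInnerProductSpace

theorem exists_norm_le_of_continuous_of_decay {E F : Type*} [NormedAddCommGroup E] [ProperSpace E]
    [NormedAddCommGroup F] {f : E → F} (hf : Continuous f) {C μ R : ℝ} (hμ : 0 ≤ μ)
    (hdecay : ∀ x, R ≤ ‖x‖ → ‖f x‖ ≤ C * ‖x‖ ^ (-μ)) : ∃ M, ∀ x, ‖f x‖ ≤ M := by
  obtain ⟨M, hM⟩ :=
    (isCompact_closedBall (0 : E) (max R 1)).exists_bound_of_continuousOn hf.continuousOn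
  refine ⟨max M |C|, fun x => ?_⟩
  rcases le_or_gt ‖x‖ (max R 1) with hx | hx
  · exact (hM x (mem_closedBall_zero_iff.2 hx)).trans (le_max_left _ _)
  · have hx1 : 1 ≤ ‖x‖ := (le_max_right R 1).trans hx.le
    have hpow : ‖x‖ ^ (-μ) ≤ 1 := Real.rpow_le_one_of_one_le_of_nonpos hx1 (neg_nonpos.2 hμ)
    calc ‖f x‖ ≤ C * ‖x‖ ^ (-μ) := hdecay x ((le_max_left R 1).trans hx.le)
      _ ≤ |C| * ‖x‖ ^ (-μ) := by gcongr; exact le_abs_self C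
      _ ≤ |C| := mul_le_of_le_one_right (abs_nonneg C) hpow
      _ ≤ max M |C| := le_max_right _ _

namespace SchwartzMap

variable {E F : Type*} [NormedAddCommGroup E] [NormedSpace ℝ E]
  [NormedAddCommGroup F] [NormedSpace ℝ F]

def euler (f : 𝓢(E, F)) : 𝓢(E, F) :=
  bilinLeftCLM (ContinuousLinearMap.id ℝ (E →L[ℝ] F))
    (ContinuousLinearMap.id ℝ E).hasTemperateGrowth (fderivCLM ℝ E F f)

@[simp]
theorem euler_apply (f : 𝓢(E, F)) (x : E) : euler f x = fderiv ℝ f x x := rfl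

theorem exists_integrable_bound_comp_smul [MeasurableSpace E] [BorelSpace E]
    [FiniteDimensional ℝ E] (μ : Measure E) [μ.IsAddHaarMeasure] (f : 𝓢(E, F)) {c : ℝ}
    (hc : 0 < c) : ∃ g : E → ℝ, Integrable g μ ∧ ∀ t, c ≤ t → ∀ y, ‖f (t • y)‖ ≤ g y := by
  set N := μ.integrablePower
  set C := 2 ^ N * (Finset.Iic (N, 0)).sup (fun m => SchwartzMap.seminorm ℝ m.1 m.2) f
  refine ⟨fun y => C * (1 + ‖c • y‖) ^ (-(N : ℝ)),
    ((μ.integrable_pow_neg_integrablePower).comp_smul hc.ne').const_mul C, fun t ht y => ?_⟩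
  dsimp only
  have hdecay : (1 + ‖t • y‖) ^ N * ‖f (t • y)‖ ≤ C := by
    simpa using one_add_le_sup_seminorm_apply (𝕜 := ℝ) (m := (N, 0)) le_rfl le_rfl f (t • y)
  have hle : 1 + ‖c • y‖ ≤ 1 + ‖t • y‖ := by
    simp only [norm_smul, Real.norm_of_nonneg hc.le, Real.norm_of_nonneg (hc.le.trans ht)]
    gcongr
  rw [Real.rpow_neg (by positivity), Real.rpow_natCast, ← div_eq_mul_inv,
    le_div_iff₀ (by positivity)]
  calc ‖f (t • y)‖ * (1 + ‖c • y‖) ^ N ≤ ‖f (t • y)‖ * (1 + ‖t • y‖) ^ N := by gcongr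
    _ ≤ C := by rw [mul_comm]; exact hdecay

end SchwartzMap

section ScaledPairing

open Module

variable {E F : Type*} [NormedAddCommGroup E] [NormedSpace ℝ E] [MeasureSpace E] [BorelSpace E]
  [NormedAddCommGroup F] [InnerProductSpace ℝ F] {B : E → F} {M : ℝ}

def scaledPairing (B f : E → F) (s : ℝ) : ℝ := ∫ x, ⟪B (s • x), f x⟫

def dilatedPairing (B f : E → F) (t : ℝ) : ℝ := ∫ y, ⟪B y, f (t • y)⟫

theorem continuous_scaledPairing (hB : Continuous B) (hM : ∀ x, ‖B x‖ ≤ M) {f : E → F}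
    (hf : Continuous f) (hfi : Integrable f) : Continuous (scaledPairing B f) :=
  continuous_of_dominated
    (fun s => ((hB.comp (continuous_const_smul s)).inner hf).aestronglyMeasurable)
    (fun s => ae_of_all _ fun x => (norm_inner_le_norm _ _).trans (by gcongr; exact hM _))
    (hfi.norm.const_mul M)
    (ae_of_all _ fun x => (hB.comp (continuous_id.smul continuous_const)).inner continuous_const)

variable [FiniteDimensional ℝ E]

theorem integrable_clm_apply_comp_smul {G : Type*} [NormedAddCommGroup G] [NormedSpace ℝ G]
    (hB : Continuous B) (hM : ∀ x, ‖B x‖ ≤ M) {Λ : E → F →L[ℝ] G} (hΛ : Continuous Λ)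
    (hΛi : Integrable Λ) (s : ℝ) : Integrable fun x => Λ x (B (s • x)) :=
  (hΛi.norm.mul_const M).mono'
    (hΛ.clm_apply (hB.comp (continuous_const_smul s))).aestronglyMeasurable
    (ae_of_all _ fun x => (Λ x).le_opNorm_of_le (hM _))

variable [(volume : Measure E).IsAddHaarMeasure]

theorem integral_integral_swap_clm_apply_comp_smul (hB : Continuous B) (hM : ∀ x, ‖B x‖ ≤ M)
    {Λ : E → F →L[ℝ] ℝ} (hΛ : Continuous Λ) (hΛi : Integrable Λ) :
    ∫ x, ∫ s in (0 : ℝ)..1, s * Λ x (B (s • x)) =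
      ∫ s in (0 : ℝ)..1, ∫ x, s * Λ x (B (s • x)) := by
  simp only [intervalIntegral.integral_of_le zero_le_one]
  refine integral_integral_swap <|
    ((hΛi.norm.mul_const M).mul_prod (continuous_abs.integrableOn_Ioc (a := 0) (b := 1))).mono'
      ?_ (ae_of_all _ fun p => ?_)
  · exact (continuous_snd.mul ((hΛ.comp continuous_fst).clm_apply
      (hB.comp (continuous_snd.smul continuous_fst)))).aestronglyMeasurable
  · simp only [Function.uncurry, norm_mul, Real.norm_eq_abs]
    rw [mul_comm]
    gcongr
    exact (Λ p.1).le_opNorm_of_le (hM _)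

theorem dilatedPairing_eq (f : E → F) {t : ℝ} (ht : 0 < t) :
    dilatedPairing B f t = (t ^ finrank ℝ E)⁻¹ * scaledPairing B f t⁻¹ := by
  have := Measure.integral_comp_smul volume (fun y => ⟪B (t⁻¹ • y), f y⟫) t
  simp only [inv_smul_smul₀ ht.ne'] at this
  rw [dilatedPairing, scaledPairing, this, abs_of_pos (by positivity), smul_eq_mul]

theorem hasDerivAt_dilatedPairing (hB : Continuous B) (hM : ∀ x, ‖B x‖ ≤ M) (f : 𝓢(E, F))
    {t : ℝ} (ht : 0 < t) :
    HasDerivAt (dilatedPairing B f) (dilatedPairing B f.euler t / t) t := by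
  obtain ⟨g, hgi, hg⟩ := f.euler.exists_integrable_bound_comp_smul volume (half_pos ht)
  have hball : ∀ u ∈ Metric.ball t (t / 2), t / 2 < u := fun u hu => by
    rw [Metric.mem_ball, Real.dist_eq, abs_lt] at hu; linarith
  have key := hasDerivAt_integral_of_dominated_loc_of_deriv_le
    (F := fun u y => ⟪B y, f (u • y)⟫) (F' := fun u y => ⟪B y, f.euler (u • y)⟫ / u)
    (bound := fun y => M * g y * (2 / t)) (Metric.ball_mem_nhds t (half_pos ht))
    (Eventually.of_forall fun u =>
      (hB.inner (f.continuous.comp (continuous_const_smul u))).aestronglyMeasurable)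
    ?_ ?_ ?_ ((hgi.const_mul M).mul_const _) ?_
  · have hderiv := key.2
    rw [integral_div] at hderiv
    exact hderiv
  · exact ((f.integrable.comp_smul ht.ne').norm.const_mul M).mono'
      (hB.inner (f.continuous.comp (continuous_const_smul t))).aestronglyMeasurable
      (ae_of_all _ fun y => (norm_inner_le_norm _ _).trans (by gcongr; exact hM _))
  · exact ((hB.inner (f.euler.continuous.comp (continuous_const_smul t))).div_const
      t).aestronglyMeasurable
  · refine ae_of_all _ fun y u hu => ?_
    have hu0 : 0 < u := (half_pos ht).trans (hball u hu)
    have hinner : ‖⟪B y, f.euler (u • y)⟫‖ ≤ M * g y :=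
      (norm_inner_le_norm _ _).trans (mul_le_mul (hM y) (hg u (hball u hu).le y)
        (norm_nonneg _) ((norm_nonneg _).trans (hM y)))
    rw [norm_div, Real.norm_of_nonneg hu0.le, div_eq_mul_inv]
    refine mul_le_mul hinner ?_ (by positivity) ((norm_nonneg _).trans hinner)
    rw [inv_le_comm₀ hu0 (by positivity), inv_div]
    exact (hball u hu).le
  · refine ae_of_all _ fun y u hu => ?_
    have hu0 : 0 < u := (half_pos ht).trans (hball u hu)
    have hcomp : HasDerivAt (fun v : ℝ => f (v • y)) (fderiv ℝ f (u • y) y) u := by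
      simpa [Function.comp_def] using
        (f.hasFDerivAt (u • y)).comp_hasDerivAt u ((hasDerivAt_id u).smul_const y)
    refine ((hasDerivAt_const u (B y)).inner ℝ hcomp).congr_deriv ?_
    simp [inner_smul_right, hu0.ne']

theorem hasDerivAt_scaledPairing (hB : Continuous B) (hM : ∀ x, ‖B x‖ ≤ M) (f : 𝓢(E, F))
    {s : ℝ} (hs : 0 < s) :
    HasDerivAt (scaledPairing B f)
      (-(finrank ℝ E * scaledPairing B f s + scaledPairing B f.euler s) / s) s := by
  set d := finrank ℝ E
  have hdil : ∀ g : E → F, dilatedPairing B g s⁻¹ = s ^ d * scaledPairing B g s := fun g => by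
    rw [dilatedPairing_eq g (inv_pos.2 hs), inv_inv, inv_pow, inv_inv]
  have hP : (fun u => u⁻¹ ^ d * dilatedPairing B f u⁻¹) =ᶠ[𝓝 s] scaledPairing B f := by
    filter_upwards [Ioi_mem_nhds hs] with u hu
    rw [dilatedPairing_eq f (inv_pos.2 hu), inv_inv, ← mul_assoc,
      mul_inv_cancel₀ (pow_ne_zero _ (inv_ne_zero hu.ne')), one_mul]
  have hH := ((hasDerivAt_pow d s⁻¹).mul
    (hasDerivAt_dilatedPairing hB hM f (inv_pos.2 hs))).comp s (hasDerivAt_inv hs.ne')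
  refine (hH.congr_of_eventuallyEq hP.symm).congr_deriv ?_
  have hpow : (d : ℝ) * s⁻¹ ^ (d - 1) = d * s⁻¹ ^ d * s := by
    rcases d with _ | d <;> simp [pow_succ]
    field_simp
  have hsd : s ^ d * s⁻¹ ^ d = 1 := by rw [← mul_pow, mul_inv_cancel₀ hs.ne', one_pow]
  rw [hdil, hdil, hpow]
  field_simp
  linear_combination (-(d * scaledPairing B f s) - scaledPairing B f.euler s) * hsd

theorem integral_pow_mul_scaledPairing_add_euler (hd : 2 ≤ finrank ℝ E) (hB : Continuous B)
    (hM : ∀ x, ‖B x‖ ≤ M) (f : 𝓢(E, F)) :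
    ∫ s in (0 : ℝ)..1, s ^ (finrank ℝ E - 2) * (scaledPairing B f s + scaledPairing B f.euler s) =
      -scaledPairing B f 1 := by
  obtain ⟨n, hn⟩ : ∃ n, finrank ℝ E = n + 2 := ⟨_, (Nat.sub_add_cancel hd).symm⟩
  have hPf := continuous_scaledPairing hB hM f.continuous f.integrable
  have hPe := continuous_scaledPairing hB hM f.euler.continuous f.euler.integrable
  have hderiv : ∀ u ∈ Set.Ioo (0 : ℝ) 1, HasDerivAt (fun u => u ^ (n + 1) * scaledPairing B f u)
      (-(u ^ n * (scaledPairing B f u + scaledPairing B f.euler u))) u := fun u hu => by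
    refine ((hasDerivAt_pow (n + 1) u).mul (hasDerivAt_scaledPairing hB hM f hu.1)).congr_deriv ?_
    have hu0 : u ≠ 0 := hu.1.ne'
    rw [hn]
    field_simp
    push_cast
    ring
  have hFTC := intervalIntegral.integral_eq_sub_of_hasDerivAt_of_le zero_le_one
    ((continuous_pow _).mul hPf).continuousOn hderiv
    ((by fun_prop : Continuous fun u : ℝ =>
      -(u ^ n * (scaledPairing B f u + scaledPairing B f.euler u))).intervalIntegrable 0 1)
  rw [hn, Nat.add_sub_cancel, ← neg_eq_iff_eq_neg, ← intervalIntegral.integral_neg, hFTC]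
  simp

end ScaledPairing

namespace SchwartzMap

variable {E : Type*} [NormedAddCommGroup E] [InnerProductSpace ℝ E]

def innerId (f : 𝓢(E, E)) : 𝓢(E, ℝ) :=
  bilinLeftCLM (innerSL ℝ) (ContinuousLinearMap.id ℝ E).hasTemperateGrowth f

theorem fderiv_innerId_apply (f : 𝓢(E, E)) (x v : E) :
    fderiv ℝ (innerId f) x v = ⟪f x, v⟫ + ⟪fderiv ℝ f x v, x⟫ := by
  change fderiv ℝ (fun y => ⟪f y, id y⟫) x v = _
  rw [((f.hasFDerivAt x).inner ℝ (hasFDerivAt_id x)).fderiv]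
  simp [fderivInnerCLM_apply]

end SchwartzMap

theorem dot3_neg_cross3 (x v c : E3) : dot3 (-cross3 x v) c = dot3 v (cross3 x c) := by
  simp [dot3, cross3, PiLp.inner_apply, Fin.sum_univ_three]
  ring

theorem dot3_cross3_curl3 (f : E3 → E3) (x b : E3) :
    dot3 b (cross3 x (curl3 f x)) = dot3 (fderiv ℝ f x b) x - dot3 b (fderiv ℝ f x x) := by
  have hL : ∀ v : E3, fderiv ℝ f x v = ∑ i, v i • fderiv ℝ f x (EuclideanSpace.single i 1) :=
    fun v => by
      conv_lhs => rw [← (EuclideanSpace.basisFun (Fin 3) ℝ).sum_repr v]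
      simp
  rw [hL b, hL x]
  simp [dot3, cross3, curl3, pderiv3, PiLp.inner_apply, Fin.sum_univ_three]
  ring

theorem DivFreeS'.integral_fderiv_apply_comp_smul {B : E3 → E3} (hB : DivFreeS' B)
    (h : 𝓢(E3, ℝ)) {s : ℝ} (hs : s ≠ 0) : ∫ x, fderiv ℝ h x (B (s • x)) = 0 := by
  set e : E3 ≃L[ℝ] E3 :=
    (LinearEquiv.smulOfNeZero ℝ E3 s⁻¹ (inv_ne_zero hs)).toContinuousLinearEquiv
  have hψ : ∀ y v, fderiv ℝ (compCLMOfContinuousLinearEquiv ℝ e h) y v =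
      s⁻¹ * fderiv ℝ h (s⁻¹ • y) v := fun y v => by
    change fderiv ℝ (h ∘ e) y v = _
    rw [e.comp_right_fderiv]
    simp [e]
  have h0 := hB (compCLMOfContinuousLinearEquiv ℝ e h)
  simp only [hψ, integral_const_mul, mul_eq_zero, inv_eq_zero, hs, false_or] at h0
  have := Measure.integral_comp_smul volume (fun y => fderiv ℝ h (s⁻¹ • y) (B y)) s
  simpa [inv_smul_smul₀ hs, h0] using this

def crossCurlForm (φ : 𝓢(E3, E3)) : 𝓢(E3, E3 →L[ℝ] ℝ) :=
  fderivCLM ℝ E3 ℝ φ.innerId - postcompCLM (innerSL ℝ) φ - postcompCLM (innerSL ℝ) φ.euler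

theorem dot3_cross3_curl3_eq_crossCurlForm (φ : 𝓢(E3, E3)) (x b : E3) :
    dot3 b (cross3 x (curl3 φ x)) = crossCurlForm φ x b := by
  rw [dot3_cross3_curl3]
  simp only [crossCurlForm, sub_apply, fderivCLM_apply, postcompCLM_apply, fderiv_innerId_apply,
    euler_apply, innerSL_apply_apply (𝕜 := ℝ), dot3]
  rw [real_inner_comm (fderiv ℝ φ x x) b]
  ring

theorem integral_crossCurlForm_apply_comp_smul {B : E3 → E3} {M : ℝ} (hBc : Continuous B)
    (hM : ∀ x, ‖B x‖ ≤ M) (hB : DivFreeS' B) (φ : 𝓢(E3, E3)) {s : ℝ} (hs : s ≠ 0) :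
    ∫ x, crossCurlForm φ x (B (s • x)) = -(scaledPairing B φ s + scaledPairing B φ.euler s) := by
  have hi (Λ : 𝓢(E3, E3 →L[ℝ] ℝ)) : Integrable fun x => Λ x (B (s • x)) :=
    integrable_clm_apply_comp_smul hBc hM Λ.continuous Λ.integrable s
  have h1 : Integrable fun x => fderiv ℝ φ.innerId x (B (s • x)) :=
    hi (fderivCLM ℝ E3 ℝ φ.innerId)
  have h2 : Integrable fun x => ⟪φ x, B (s • x)⟫ := hi (postcompCLM (innerSL ℝ) φ)
  have h3 : Integrable fun x => ⟪φ.euler x, B (s • x)⟫ := hi (postcompCLM (innerSL ℝ) φ.euler)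
  calc ∫ x, crossCurlForm φ x (B (s • x))
      = ∫ x, (fderiv ℝ φ.innerId x (B (s • x)) - ⟪φ x, B (s • x)⟫ - ⟪φ.euler x, B (s • x)⟫) :=
        rfl
    _ = (∫ x, fderiv ℝ φ.innerId x (B (s • x))) - (∫ x, ⟪φ x, B (s • x)⟫) -
          ∫ x, ⟪φ.euler x, B (s • x)⟫ := by
        have h12 : Integrable fun x => fderiv ℝ φ.innerId x (B (s • x)) - ⟪φ x, B (s • x)⟫ :=
          h1.sub h2
        rw [integral_sub h12 h3, integral_sub h1 h2]
    _ = -(scaledPairing B φ s + scaledPairing B φ.euler s) := by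
        simp only [hB.integral_fderiv_apply_comp_smul φ.innerId hs, scaledPairing,
          real_inner_comm]
        ring

theorem dot3_transversalGauge_curl3 {B : E3 → E3} (hB : Continuous B) (φ : 𝓢(E3, E3))
    (x : E3) :
    dot3 (transversalGauge B x) (curl3 φ x) =
      ∫ s in (0 : ℝ)..1, s * crossCurlForm φ x (B (s • x)) := by
  set w := cross3 x (curl3 φ x)
  have hint : IntervalIntegrable (fun s : ℝ => s • B (s • x)) volume 0 1 :=
    (continuous_id.smul (hB.comp (continuous_id.smul continuous_const))).intervalIntegrable 0 1
  rw [transversalGauge, dot3_neg_cross3, dot3, real_inner_comm, ← innerSL_apply_apply ℝ,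
    ← (innerSL ℝ w).intervalIntegral_comp_comm hint]
  simp [← dot3_cross3_curl3_eq_crossCurlForm, w, dot3, real_inner_comm]

/-- The transversal gauge is a distributional vector potential for `B`
(Proposition Ptg.2). -/
theorem statement2 (B : E3 → E3) (hBc : Continuous B) (hBmd : IsMediumDecay B) :
    CurlEqS' (transversalGauge B) B := by
  obtain ⟨-, ⟨C, -, μ, hμ, R, hdecay⟩, hdiv⟩ := hBmd
  obtain ⟨M, hM⟩ := exists_norm_le_of_continuous_of_decay hBc (by linarith) hdecay
  intro φ
  have hdim : Module.finrank ℝ E3 = 3 := finrank_euclideanSpace_fin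
  calc ∫ x, dot3 (transversalGauge B x) (curl3 φ x)
      = ∫ x, ∫ s in (0 : ℝ)..1, s * crossCurlForm φ x (B (s • x)) := by
        simp_rw [dot3_transversalGauge_curl3 hBc]
    _ = ∫ s in (0 : ℝ)..1, ∫ x, s * crossCurlForm φ x (B (s • x)) :=
        integral_integral_swap_clm_apply_comp_smul hBc hM (crossCurlForm φ).continuous
          (crossCurlForm φ).integrable
    _ = ∫ s in (0 : ℝ)..1, -(s ^ (Module.finrank ℝ E3 - 2) *
          (scaledPairing B φ s + scaledPairing B φ.euler s)) := by
        refine intervalIntegral.integral_congr_ae (ae_of_all _ fun s hs => ?_)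
        rw [Set.uIoc_of_le zero_le_one] at hs
        rw [integral_const_mul, integral_crossCurlForm_apply_comp_smul hBc hM hdiv φ hs.1.ne',
          hdim]
        ring
    _ = scaledPairing B φ 1 := by
        rw [intervalIntegral.integral_neg,
          integral_pow_mul_scaledPairing_add_euler (by rw [hdim]; norm_num) hBc hM, neg_neg]
    _ = ∫ x, dot3 (B x) (φ x) := by simp [scaledPairing, dot3]
end
end

section
/- Define A : ℝ³ → ℝ³ by A(x) := (x₁(x₁²−x₂²+x₃²+1), x₂(x₁²−x₂²−x₃²−1), 0)/(|x|²+1)², and set B := curl A. Then A is C^∞ with div A = 0 everywhere and A(x) → 0 as |x| → ∞; B is C^∞ with |B(x)| ≤ C(1+|x|)^{−2}; but A is not a vector potential of medium range: since A(x₁,0,0) = (x₁/(x₁²+1), 0, 0), one has sup{ |A(x)·x|/|x| : |x| ≥ r } ≥ r/(r²+1) and hence ∫₀^∞ sup{ |A(x)·x|/|x| : |x| ≥ r } dr = ∞. (Thus for 3/2 < μ ≤ 2 the Coulomb gauge vector potential of a medium-decay field need not be of medium range.) -/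
open MeasureTheory Filter Topology
open scoped ENNReal

noncomputable section

/-- The numerator of the counterexample vector potential. -/
def vec10 (x : E3) : E3 :=
  WithLp.toLp 2 ![x 0 * ((x 0) ^ 2 - (x 1) ^ 2 + (x 2) ^ 2 + 1),
    x 1 * ((x 0) ^ 2 - (x 1) ^ 2 - (x 2) ^ 2 - 1), 0]

/-- The counterexample vector potential
`A(x) = (x₁(x₁²−x₂²+x₃²+1), x₂(x₁²−x₂²−x₃²−1), 0)/(|x|²+1)²`. -/
def A10 : E3 → E3 := fun x => ((‖x‖ ^ 2 + 1) ^ 2)⁻¹ • vec10 x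

def Qf (x : E3) : ℝ := (x 0)^2 + (x 1)^2 + (x 2)^2 + 1

lemma Qf_pos (x : E3) : 0 < Qf x := by unfold Qf; positivity

lemma norm_sq_eq (x : E3) : ‖x‖^2 = (x 0)^2 + (x 1)^2 + (x 2)^2 := by
  rw [EuclideanSpace.norm_eq, Real.sq_sqrt (by positivity)]
  simp [Fin.sum_univ_three, sq_abs]

def f0 (x : E3) : ℝ :=
  x 0 * ((x 0)^2 - (x 1)^2 + (x 2)^2 + 1) * ((Qf x)^2)⁻¹
def f1 (x : E3) : ℝ :=
  x 1 * ((x 0)^2 - (x 1)^2 - (x 2)^2 - 1) * ((Qf x)^2)⁻¹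

lemma A10_apply_0 (x : E3) : A10 x 0 = f0 x := by
  simp [A10, vec10, f0, Qf, norm_sq_eq, PiLp.smul_apply, smul_eq_mul]
  ring
lemma A10_apply_1 (x : E3) : A10 x 1 = f1 x := by
  simp [A10, vec10, f1, Qf, norm_sq_eq, PiLp.smul_apply, smul_eq_mul]
  ring
lemma A10_apply_2 (x : E3) : A10 x 2 = 0 := by
  simp [A10, vec10, PiLp.smul_apply, smul_eq_mul]

lemma coord_contDiff (i : Fin 3) : ContDiff ℝ (⊤ : ℕ∞) (fun x : E3 => x i) := by
  have := (EuclideanSpace.proj (𝕜 := ℝ) (i : Fin 3)).contDiff (n := (⊤ : ℕ∞))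
  simpa [PiLp.proj_apply] using this

lemma Qf_contDiff : ContDiff ℝ (⊤ : ℕ∞) Qf := by
  unfold Qf
  exact ((((coord_contDiff 0).pow 2).add ((coord_contDiff 1).pow 2)).add
    ((coord_contDiff 2).pow 2)).add contDiff_const

lemma f0_contDiff : ContDiff ℝ (⊤ : ℕ∞) f0 := by
  unfold f0
  refine ContDiff.mul (ContDiff.mul (coord_contDiff 0) ?_) (ContDiff.inv (Qf_contDiff.pow 2) ?_)
  · exact ((((coord_contDiff 0).pow 2).sub ((coord_contDiff 1).pow 2)).add
      ((coord_contDiff 2).pow 2)).add contDiff_const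
  · intro x; exact ne_of_gt (by have := Qf_pos x; positivity)

lemma f1_contDiff : ContDiff ℝ (⊤ : ℕ∞) f1 := by
  unfold f1
  refine ContDiff.mul (ContDiff.mul (coord_contDiff 1) ?_) (ContDiff.inv (Qf_contDiff.pow 2) ?_)
  · exact ((((coord_contDiff 0).pow 2).sub ((coord_contDiff 1).pow 2)).sub
      ((coord_contDiff 2).pow 2)).sub contDiff_const
  · intro x; exact ne_of_gt (by have := Qf_pos x; positivity)

lemma A10_contDiff : ContDiff ℝ (⊤ : ℕ∞) A10 := by
  rw [contDiff_euclidean]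
  intro i
  fin_cases i
  · simpa [A10_apply_0] using f0_contDiff
  · simpa [A10_apply_1] using f1_contDiff
  · simpa [A10_apply_2] using (contDiff_const (c := (0:ℝ)))

lemma line_hasDerivAt (x v : E3) : HasDerivAt (fun t : ℝ => x + t • v) v 0 := by
  simpa using ((hasDerivAt_id (0:ℝ)).smul_const v).const_add x

lemma fderiv_single_eq {g : E3 → ℝ} {x : E3} (hg : DifferentiableAt ℝ g x) {v : E3} {d : ℝ}
    (h : HasDerivAt (fun t : ℝ => g (x + t • v)) d 0) : fderiv ℝ g x v = d := by
  have hg' : HasFDerivAt g (fderiv ℝ g x) (x + (0:ℝ) • v) := by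
    simpa using hg.hasFDerivAt
  have h2 : HasDerivAt (fun t : ℝ => g (x + t • v)) (fderiv ℝ g x v) 0 := by
    exact hg'.comp_hasDerivAt 0 (line_hasDerivAt x v)
  exact h2.unique h

lemma pderiv3_eq' (f : E3 → E3) (x : E3) (hdiff : DifferentiableAt ℝ f x) (i k : Fin 3) :
    fderiv ℝ f x (EuclideanSpace.single i 1) k
      = fderiv ℝ (fun y => f y k) x (EuclideanSpace.single i 1) := by
  have h := ((EuclideanSpace.proj (𝕜 := ℝ) k).hasFDerivAt.comp x hdiff.hasFDerivAt).fderiv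
  rw [show (fun y => f y k) = (EuclideanSpace.proj (𝕜 := ℝ) k) ∘ f from rfl, h]
  rfl

lemma coord_line (x : E3) (i j : Fin 3) (t : ℝ) :
    (x + t • (EuclideanSpace.single i (1:ℝ)) : E3) j = x j + if j = i then t else 0 := by
  simp [EuclideanSpace.single_apply]

lemma pd00 (x : E3) : fderiv ℝ f0 x (EuclideanSpace.single 0 1) =
    (((x 0)^2 - (x 1)^2 + (x 2)^2 + 1 + 2*(x 0)^2) * Qf x
      - 4*(x 0)^2*((x 0)^2 - (x 1)^2 + (x 2)^2 + 1)) / (Qf x)^3 := by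
  apply fderiv_single_eq (f0_contDiff.differentiable (by simp) x)
  have hline : (fun t : ℝ => f0 (x + t • EuclideanSpace.single 0 1)) =
      fun t => (x 0 + t) * ((x 0 + t)^2 - (x 1)^2 + (x 2)^2 + 1) *
        ((((x 0 + t)^2 + (x 1)^2 + (x 2)^2 + 1)^2)⁻¹) := by
    funext t; simp [f0, Qf, coord_line]
  rw [hline]
  have ha : HasDerivAt (fun t : ℝ => x 0 + t) 1 0 := by
    simpa using (hasDerivAt_id (0:ℝ)).const_add (x 0)
  have num := ha.mul ((((ha.pow 2).sub_const ((x 1)^2)).add_const ((x 2)^2)).add_const 1)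
  have den := (((ha.pow 2).add_const ((x 1)^2)).add_const ((x 2)^2)).add_const 1
  have hne : ((x 0 + 0)^2 + (x 1)^2 + (x 2)^2 + 1)^2 ≠ 0 := by positivity
  have total := num.mul ((den.pow 2).inv hne)
  refine total.congr_deriv ?_
  have hq : (0:ℝ) < (x 0)^2 + (x 1)^2 + (x 2)^2 + 1 := by positivity
  simp only [Qf, Pi.mul_apply, Pi.pow_apply, Pi.inv_apply, Pi.add_apply, Pi.sub_apply]
  field_simp
  ring

lemma pd10 (x : E3) : fderiv ℝ f0 x (EuclideanSpace.single 1 1) =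
    -2*(x 0)*(x 1)*(Qf x + 2*((x 0)^2 - (x 1)^2 + (x 2)^2 + 1)) / (Qf x)^3 := by
  apply fderiv_single_eq (f0_contDiff.differentiable (by simp) x)
  have hline : (fun t : ℝ => f0 (x + t • EuclideanSpace.single 1 1)) =
      fun t => x 0 * ((x 0)^2 - (x 1 + t)^2 + (x 2)^2 + 1) *
        ((((x 0)^2 + (x 1 + t)^2 + (x 2)^2 + 1)^2)⁻¹) := by
    funext t; simp [f0, Qf, coord_line]
  rw [hline]
  have hb : HasDerivAt (fun t : ℝ => x 1 + t) 1 0 := by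
    simpa using (hasDerivAt_id (0:ℝ)).const_add (x 1)
  have num := (hasDerivAt_const (0:ℝ) (x 0)).mul
    ((((hasDerivAt_const (0:ℝ) ((x 0)^2)).sub (hb.pow 2)).add_const ((x 2)^2)).add_const 1)
  have den := (((hasDerivAt_const (0:ℝ) ((x 0)^2)).add (hb.pow 2)).add_const ((x 2)^2)).add_const 1
  have hne : ((x 0)^2 + (x 1 + 0)^2 + (x 2)^2 + 1)^2 ≠ 0 := by positivity
  have total := num.mul ((den.pow 2).inv hne)
  refine total.congr_deriv ?_
  have hq : (0:ℝ) < (x 0)^2 + (x 1)^2 + (x 2)^2 + 1 := by positivity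
  simp only [Qf, Pi.mul_apply, Pi.pow_apply, Pi.inv_apply, Pi.add_apply, Pi.sub_apply]
  field_simp
  ring

lemma pd20 (x : E3) : fderiv ℝ f0 x (EuclideanSpace.single 2 1) =
    2*(x 0)*(x 2)*(Qf x - 2*((x 0)^2 - (x 1)^2 + (x 2)^2 + 1)) / (Qf x)^3 := by
  apply fderiv_single_eq (f0_contDiff.differentiable (by simp) x)
  have hline : (fun t : ℝ => f0 (x + t • EuclideanSpace.single 2 1)) =
      fun t => x 0 * ((x 0)^2 - (x 1)^2 + (x 2 + t)^2 + 1) *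
        ((((x 0)^2 + (x 1)^2 + (x 2 + t)^2 + 1)^2)⁻¹) := by
    funext t; simp [f0, Qf, coord_line]
  rw [hline]
  have hc : HasDerivAt (fun t : ℝ => x 2 + t) 1 0 := by
    simpa using (hasDerivAt_id (0:ℝ)).const_add (x 2)
  have num := (hasDerivAt_const (0:ℝ) (x 0)).mul
    (((hasDerivAt_const (0:ℝ) ((x 0)^2 - (x 1)^2)).add (hc.pow 2)).add_const 1)
  have den := (((hasDerivAt_const (0:ℝ) ((x 0)^2)).add_const ((x 1)^2)).add (hc.pow 2)).add_const 1
  have hne : ((x 0)^2 + (x 1)^2 + (x 2 + 0)^2 + 1)^2 ≠ 0 := by positivity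
  have total := num.mul ((den.pow 2).inv hne)
  refine total.congr_deriv ?_
  have hq : (0:ℝ) < (x 0)^2 + (x 1)^2 + (x 2)^2 + 1 := by positivity
  simp only [Qf, Pi.mul_apply, Pi.pow_apply, Pi.inv_apply, Pi.add_apply, Pi.sub_apply]
  field_simp
  ring

lemma pd01 (x : E3) : fderiv ℝ f1 x (EuclideanSpace.single 0 1) =
    2*(x 0)*(x 1)*(Qf x - 2*((x 0)^2 - (x 1)^2 - (x 2)^2 - 1)) / (Qf x)^3 := by
  apply fderiv_single_eq (f1_contDiff.differentiable (by simp) x)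
  have hline : (fun t : ℝ => f1 (x + t • EuclideanSpace.single 0 1)) =
      fun t => x 1 * ((x 0 + t)^2 - (x 1)^2 - (x 2)^2 - 1) *
        ((((x 0 + t)^2 + (x 1)^2 + (x 2)^2 + 1)^2)⁻¹) := by
    funext t; simp [f1, Qf, coord_line]
  rw [hline]
  have ha : HasDerivAt (fun t : ℝ => x 0 + t) 1 0 := by
    simpa using (hasDerivAt_id (0:ℝ)).const_add (x 0)
  have num := (hasDerivAt_const (0:ℝ) (x 1)).mul
    ((((ha.pow 2).sub_const ((x 1)^2)).sub_const ((x 2)^2)).sub_const 1)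
  have den := (((ha.pow 2).add_const ((x 1)^2)).add_const ((x 2)^2)).add_const 1
  have hne : ((x 0 + 0)^2 + (x 1)^2 + (x 2)^2 + 1)^2 ≠ 0 := by positivity
  have total := num.mul ((den.pow 2).inv hne)
  refine total.congr_deriv ?_
  have hq : (0:ℝ) < (x 0)^2 + (x 1)^2 + (x 2)^2 + 1 := by positivity
  simp only [Qf, Pi.mul_apply, Pi.pow_apply, Pi.inv_apply, Pi.add_apply, Pi.sub_apply]
  field_simp
  ring

lemma pd11 (x : E3) : fderiv ℝ f1 x (EuclideanSpace.single 1 1) =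
    (((x 0)^2 - (x 1)^2 - (x 2)^2 - 1 - 2*(x 1)^2) * Qf x
      - 4*(x 1)^2*((x 0)^2 - (x 1)^2 - (x 2)^2 - 1)) / (Qf x)^3 := by
  apply fderiv_single_eq (f1_contDiff.differentiable (by simp) x)
  have hline : (fun t : ℝ => f1 (x + t • EuclideanSpace.single 1 1)) =
      fun t => (x 1 + t) * ((x 0)^2 - (x 1 + t)^2 - (x 2)^2 - 1) *
        ((((x 0)^2 + (x 1 + t)^2 + (x 2)^2 + 1)^2)⁻¹) := by
    funext t; simp [f1, Qf, coord_line]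
  rw [hline]
  have hb : HasDerivAt (fun t : ℝ => x 1 + t) 1 0 := by
    simpa using (hasDerivAt_id (0:ℝ)).const_add (x 1)
  have num := hb.mul
    ((((hasDerivAt_const (0:ℝ) ((x 0)^2)).sub (hb.pow 2)).sub_const ((x 2)^2)).sub_const 1)
  have den := (((hasDerivAt_const (0:ℝ) ((x 0)^2)).add (hb.pow 2)).add_const ((x 2)^2)).add_const 1
  have hne : ((x 0)^2 + (x 1 + 0)^2 + (x 2)^2 + 1)^2 ≠ 0 := by positivity
  have total := num.mul ((den.pow 2).inv hne)
  refine total.congr_deriv ?_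
  have hq : (0:ℝ) < (x 0)^2 + (x 1)^2 + (x 2)^2 + 1 := by positivity
  simp only [Qf, Pi.mul_apply, Pi.pow_apply, Pi.inv_apply, Pi.add_apply, Pi.sub_apply]
  field_simp
  ring

lemma pd21 (x : E3) : fderiv ℝ f1 x (EuclideanSpace.single 2 1) =
    -2*(x 1)*(x 2)*(Qf x + 2*((x 0)^2 - (x 1)^2 - (x 2)^2 - 1)) / (Qf x)^3 := by
  apply fderiv_single_eq (f1_contDiff.differentiable (by simp) x)
  have hline : (fun t : ℝ => f1 (x + t • EuclideanSpace.single 2 1)) =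
      fun t => x 1 * ((x 0)^2 - (x 1)^2 - (x 2 + t)^2 - 1) *
        ((((x 0)^2 + (x 1)^2 + (x 2 + t)^2 + 1)^2)⁻¹) := by
    funext t; simp [f1, Qf, coord_line]
  rw [hline]
  have hc : HasDerivAt (fun t : ℝ => x 2 + t) 1 0 := by
    simpa using (hasDerivAt_id (0:ℝ)).const_add (x 2)
  have num := (hasDerivAt_const (0:ℝ) (x 1)).mul
    (((hasDerivAt_const (0:ℝ) ((x 0)^2 - (x 1)^2)).sub (hc.pow 2)).sub_const 1)
  have den := (((hasDerivAt_const (0:ℝ) ((x 0)^2)).add_const ((x 1)^2)).add (hc.pow 2)).add_const 1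
  have hne : ((x 0)^2 + (x 1)^2 + (x 2 + 0)^2 + 1)^2 ≠ 0 := by positivity
  have total := num.mul ((den.pow 2).inv hne)
  refine total.congr_deriv ?_
  have hq : (0:ℝ) < (x 0)^2 + (x 1)^2 + (x 2)^2 + 1 := by positivity
  simp only [Qf, Pi.mul_apply, Pi.pow_apply, Pi.inv_apply, Pi.add_apply, Pi.sub_apply]
  field_simp
  ring

lemma pderiv_A10 (i k : Fin 3) (x : E3) :
    pderiv3 A10 i k x = fderiv ℝ (fun y => A10 y k) x (EuclideanSpace.single i 1) :=
  pderiv3_eq' A10 x (A10_contDiff.differentiable (by simp) x) i k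

lemma comp0 : (fun y : E3 => A10 y 0) = f0 := funext A10_apply_0
lemma comp1 : (fun y : E3 => A10 y 1) = f1 := funext A10_apply_1
lemma comp2 : (fun y : E3 => A10 y 2) = fun _ => (0:ℝ) := funext A10_apply_2

lemma pd_k2 (i : Fin 3) (x : E3) : pderiv3 A10 i 2 x = 0 := by
  rw [pderiv_A10, comp2, fderiv_fun_const]
  rfl

lemma div_A10 (x : E3) :
    pderiv3 A10 0 0 x + pderiv3 A10 1 1 x + pderiv3 A10 2 2 x = 0 := by
  rw [pderiv_A10, pderiv_A10, pd_k2, comp0, comp1, pd00, pd11]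
  have hq : (0:ℝ) < Qf x := Qf_pos x
  field_simp
  simp only [Qf]
  ring

def B10 (x : E3) : E3 :=
  WithLp.toLp 2 ![((Qf x)^3)⁻¹ * (2*(x 1)*(x 2)*(Qf x + 2*((x 0)^2 - (x 1)^2 - (x 2)^2 - 1))),
    ((Qf x)^3)⁻¹ * (2*(x 0)*(x 2)*(Qf x - 2*((x 0)^2 - (x 1)^2 + (x 2)^2 + 1))),
    ((Qf x)^3)⁻¹ * (4*(x 0)*(x 1)*((x 0)^2 + (x 1)^2 + 3*(x 2)^2 + 3))]

lemma B10_apply_0 (x : E3) : B10 x 0 =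
    ((Qf x)^3)⁻¹ * (2*(x 1)*(x 2)*(Qf x + 2*((x 0)^2 - (x 1)^2 - (x 2)^2 - 1))) := by
  simp [B10]
lemma B10_apply_1 (x : E3) : B10 x 1 =
    ((Qf x)^3)⁻¹ * (2*(x 0)*(x 2)*(Qf x - 2*((x 0)^2 - (x 1)^2 + (x 2)^2 + 1))) := by
  simp [B10]
lemma B10_apply_2 (x : E3) : B10 x 2 =
    ((Qf x)^3)⁻¹ * (4*(x 0)*(x 1)*((x 0)^2 + (x 1)^2 + 3*(x 2)^2 + 3)) := by
  simp [B10]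

lemma curl_A10_eq : curl3 A10 = B10 := by
  funext x
  have hq : (0:ℝ) < Qf x := Qf_pos x
  ext i
  fin_cases i
  · show pderiv3 A10 1 2 x - pderiv3 A10 2 1 x = B10 x 0
    rw [pd_k2, pderiv_A10, comp1, pd21, B10_apply_0]
    field_simp
    ring
  · show pderiv3 A10 2 0 x - pderiv3 A10 0 2 x = B10 x 1
    rw [pd_k2, pderiv_A10, comp0, pd20, B10_apply_1]
    field_simp
    ring
  · show pderiv3 A10 0 1 x - pderiv3 A10 1 0 x = B10 x 2
    rw [pderiv_A10 0 1, pderiv_A10 1 0, comp0, comp1, pd01, pd10, B10_apply_2]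
    field_simp
    simp only [Qf]
    ring

lemma Qinv3_contDiff : ContDiff ℝ (⊤ : ℕ∞) (fun x : E3 => ((Qf x)^3)⁻¹) :=
  (Qf_contDiff.pow 3).inv (fun x => by have := Qf_pos x; positivity)

lemma B10_contDiff : ContDiff ℝ (⊤ : ℕ∞) B10 := by
  rw [contDiff_euclidean]
  have c0 := coord_contDiff 0
  have c1 := coord_contDiff 1
  have c2 := coord_contDiff 2
  intro i
  fin_cases i
  · rw [show (fun x : E3 => B10 x (⟨0, by norm_num⟩ : Fin 3)) = fun x =>
      ((Qf x)^3)⁻¹ * (2*(x 1)*(x 2)*(Qf x + 2*((x 0)^2 - (x 1)^2 - (x 2)^2 - 1)))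
      from funext fun x => B10_apply_0 x]
    exact Qinv3_contDiff.mul (((contDiff_const.mul c1).mul c2).mul
      (Qf_contDiff.add (contDiff_const.mul ((((c0.pow 2).sub (c1.pow 2)).sub
        (c2.pow 2)).sub contDiff_const))))
  · rw [show (fun x : E3 => B10 x (⟨1, by norm_num⟩ : Fin 3)) = fun x =>
      ((Qf x)^3)⁻¹ * (2*(x 0)*(x 2)*(Qf x - 2*((x 0)^2 - (x 1)^2 + (x 2)^2 + 1)))
      from funext fun x => B10_apply_1 x]
    exact Qinv3_contDiff.mul (((contDiff_const.mul c0).mul c2).mul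
      (Qf_contDiff.sub (contDiff_const.mul ((((c0.pow 2).sub (c1.pow 2)).add
        (c2.pow 2)).add contDiff_const))))
  · rw [show (fun x : E3 => B10 x (⟨2, by norm_num⟩ : Fin 3)) = fun x =>
      ((Qf x)^3)⁻¹ * (4*(x 0)*(x 1)*((x 0)^2 + (x 1)^2 + 3*(x 2)^2 + 3))
      from funext fun x => B10_apply_2 x]
    exact Qinv3_contDiff.mul (((contDiff_const.mul c0).mul c1).mul
      ((((c0.pow 2).add (c1.pow 2)).add (contDiff_const.mul (c2.pow 2))).add contDiff_const))

lemma coord_sq_le (x : E3) (i : Fin 3) : (x i)^2 ≤ ‖x‖^2 := by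
  rw [norm_sq_eq]
  fin_cases i
  · show (x 0)^2 ≤ _
    nlinarith [sq_nonneg (x 1), sq_nonneg (x 2)]
  · show (x 1)^2 ≤ _
    nlinarith [sq_nonneg (x 0), sq_nonneg (x 2)]
  · show (x 2)^2 ≤ _
    nlinarith [sq_nonneg (x 0), sq_nonneg (x 1)]

lemma coord_abs_le (x : E3) (i : Fin 3) : |x i| ≤ ‖x‖ := by
  rw [← Real.sqrt_sq_eq_abs, ← Real.sqrt_sq (norm_nonneg x)]
  exact Real.sqrt_le_sqrt (coord_sq_le x i)

lemma norm_le_sum (y : E3) : ‖y‖ ≤ |y 0| + |y 1| + |y 2| := by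
  rw [EuclideanSpace.norm_eq]
  have h : ∑ i, ‖y i‖^2 ≤ (|y 0| + |y 1| + |y 2|)^2 := by
    simp only [Fin.sum_univ_three, Real.norm_eq_abs]
    nlinarith [abs_nonneg (y 0), abs_nonneg (y 1), abs_nonneg (y 2),
      mul_nonneg (abs_nonneg (y 0)) (abs_nonneg (y 1)),
      mul_nonneg (abs_nonneg (y 0)) (abs_nonneg (y 2)),
      mul_nonneg (abs_nonneg (y 1)) (abs_nonneg (y 2))]
  calc √(∑ i, ‖y i‖^2) ≤ √((|y 0| + |y 1| + |y 2|)^2) := Real.sqrt_le_sqrt h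
    _ = |y 0| + |y 1| + |y 2| := Real.sqrt_sq (by positivity)

lemma prod_bound {p w q k : ℝ} (hq : 0 < q) (hp : |p| ≤ q) (hw : |w| ≤ k*q) :
    |2*p*w| ≤ (2*k)*q^2 := by
  have h2 : |2*p*w| = 2 * |p| * |w| := by rw [abs_mul, abs_mul, abs_two]
  rw [h2]
  nlinarith [abs_nonneg p, abs_nonneg w, mul_le_mul hp hw (abs_nonneg w) hq.le]

lemma B0_abs (x : E3) : |B10 x 0| ≤ 6 / Qf x := by
  rw [B10_apply_0]
  have hq := Qf_pos x
  have hbc : |x 1 * x 2| ≤ Qf x := abs_le.mpr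
    ⟨by simp only [Qf]; nlinarith [sq_nonneg (x 1 + x 2), sq_nonneg (x 0)],
     by simp only [Qf]; nlinarith [sq_nonneg (x 1 - x 2), sq_nonneg (x 0)]⟩
  have hw : |Qf x + 2*((x 0)^2 - (x 1)^2 - (x 2)^2 - 1)| ≤ 3 * Qf x := abs_le.mpr
    ⟨by simp only [Qf]; nlinarith [sq_nonneg (x 0), sq_nonneg (x 1), sq_nonneg (x 2)],
     by simp only [Qf]; nlinarith [sq_nonneg (x 0), sq_nonneg (x 1), sq_nonneg (x 2)]⟩
  rw [abs_mul, abs_inv, abs_pow, abs_of_pos hq,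
    show 2*(x 1)*(x 2)*(Qf x + 2*((x 0)^2 - (x 1)^2 - (x 2)^2 - 1))
      = 2*(x 1 * x 2)*(Qf x + 2*((x 0)^2 - (x 1)^2 - (x 2)^2 - 1)) by ring]
  calc ((Qf x)^3)⁻¹ * |2*(x 1 * x 2)*(Qf x + 2*((x 0)^2 - (x 1)^2 - (x 2)^2 - 1))|
      ≤ ((Qf x)^3)⁻¹ * ((2*3)*(Qf x)^2) :=
        mul_le_mul_of_nonneg_left (prod_bound hq hbc hw) (by positivity)
    _ = 6 / Qf x := by field_simp; ring

lemma B1_abs (x : E3) : |B10 x 1| ≤ 6 / Qf x := by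
  rw [B10_apply_1]
  have hq := Qf_pos x
  have hbc : |x 0 * x 2| ≤ Qf x := abs_le.mpr
    ⟨by simp only [Qf]; nlinarith [sq_nonneg (x 0 + x 2), sq_nonneg (x 1)],
     by simp only [Qf]; nlinarith [sq_nonneg (x 0 - x 2), sq_nonneg (x 1)]⟩
  have hw : |Qf x - 2*((x 0)^2 - (x 1)^2 + (x 2)^2 + 1)| ≤ 3 * Qf x := abs_le.mpr
    ⟨by simp only [Qf]; nlinarith [sq_nonneg (x 0), sq_nonneg (x 1), sq_nonneg (x 2)],
     by simp only [Qf]; nlinarith [sq_nonneg (x 0), sq_nonneg (x 1), sq_nonneg (x 2)]⟩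
  rw [abs_mul, abs_inv, abs_pow, abs_of_pos hq,
    show 2*(x 0)*(x 2)*(Qf x - 2*((x 0)^2 - (x 1)^2 + (x 2)^2 + 1))
      = 2*(x 0 * x 2)*(Qf x - 2*((x 0)^2 - (x 1)^2 + (x 2)^2 + 1)) by ring]
  calc ((Qf x)^3)⁻¹ * |2*(x 0 * x 2)*(Qf x - 2*((x 0)^2 - (x 1)^2 + (x 2)^2 + 1))|
      ≤ ((Qf x)^3)⁻¹ * ((2*3)*(Qf x)^2) :=
        mul_le_mul_of_nonneg_left (prod_bound hq hbc hw) (by positivity)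
    _ = 6 / Qf x := by field_simp; ring

lemma B2_abs (x : E3) : |B10 x 2| ≤ 12 / Qf x := by
  rw [B10_apply_2]
  have hq := Qf_pos x
  have hbc : |x 0 * x 1| ≤ Qf x := abs_le.mpr
    ⟨by simp only [Qf]; nlinarith [sq_nonneg (x 0 + x 1), sq_nonneg (x 2)],
     by simp only [Qf]; nlinarith [sq_nonneg (x 0 - x 1), sq_nonneg (x 2)]⟩
  have hw : |2*((x 0)^2 + (x 1)^2 + 3*(x 2)^2 + 3)| ≤ 6 * Qf x := abs_le.mpr
    ⟨by simp only [Qf]; nlinarith [sq_nonneg (x 0), sq_nonneg (x 1), sq_nonneg (x 2)],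
     by simp only [Qf]; nlinarith [sq_nonneg (x 0), sq_nonneg (x 1), sq_nonneg (x 2)]⟩
  rw [abs_mul, abs_inv, abs_pow, abs_of_pos hq,
    show 4*(x 0)*(x 1)*((x 0)^2 + (x 1)^2 + 3*(x 2)^2 + 3)
      = 2*(x 0 * x 1)*(2*((x 0)^2 + (x 1)^2 + 3*(x 2)^2 + 3)) by ring]
  calc ((Qf x)^3)⁻¹ * |2*(x 0 * x 1)*(2*((x 0)^2 + (x 1)^2 + 3*(x 2)^2 + 3))|
      ≤ ((Qf x)^3)⁻¹ * ((2*6)*(Qf x)^2) :=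
        mul_le_mul_of_nonneg_left (prod_bound hq hbc hw) (by positivity)
    _ = 12 / Qf x := by field_simp; ring

lemma B10_norm_le (x : E3) : ‖B10 x‖ ≤ 48 * (1 + ‖x‖) ^ (-(2:ℝ)) := by
  have hq := Qf_pos x
  have hQ : Qf x = ‖x‖^2 + 1 := by rw [norm_sq_eq]; rfl
  have hr : (1+‖x‖) ^ (-(2:ℝ)) = ((1+‖x‖)^2)⁻¹ := by
    rw [Real.rpow_neg (by positivity), ← Real.rpow_natCast (1+‖x‖) 2]
    norm_num
  rw [hr]
  calc ‖B10 x‖ ≤ |B10 x 0| + |B10 x 1| + |B10 x 2| := norm_le_sum _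
    _ ≤ 6 / Qf x + 6 / Qf x + 12 / Qf x := by
        gcongr
        exacts [B0_abs x, B1_abs x, B2_abs x]
    _ = 24 / Qf x := by ring
    _ ≤ 48 * ((1+‖x‖)^2)⁻¹ := by
        rw [hQ, show (48:ℝ) * ((1+‖x‖)^2)⁻¹ = 48 / (1+‖x‖)^2 by ring,
          div_le_div_iff₀ (by positivity) (by positivity)]
        nlinarith [sq_nonneg (‖x‖ - 1), norm_nonneg x]

lemma abs_f0_le (x : E3) : |f0 x| ≤ ‖x‖ / Qf x := by
  have hq := Qf_pos x
  have h1 : |x 0| ≤ ‖x‖ := coord_abs_le x 0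
  have h2 : |(x 0)^2 - (x 1)^2 + (x 2)^2 + 1| ≤ Qf x := abs_le.mpr
    ⟨by simp only [Qf]; nlinarith [sq_nonneg (x 0), sq_nonneg (x 1), sq_nonneg (x 2)],
     by simp only [Qf]; nlinarith [sq_nonneg (x 0), sq_nonneg (x 1), sq_nonneg (x 2)]⟩
  unfold f0
  rw [abs_mul, abs_mul, abs_inv, abs_pow, abs_of_pos hq]
  calc |x 0| * |(x 0)^2 - (x 1)^2 + (x 2)^2 + 1| * ((Qf x)^2)⁻¹
      ≤ ‖x‖ * Qf x * ((Qf x)^2)⁻¹ := by gcongr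
    _ = ‖x‖ / Qf x := by field_simp

lemma abs_f1_le (x : E3) : |f1 x| ≤ ‖x‖ / Qf x := by
  have hq := Qf_pos x
  have h1 : |x 1| ≤ ‖x‖ := coord_abs_le x 1
  have h2 : |(x 0)^2 - (x 1)^2 - (x 2)^2 - 1| ≤ Qf x := abs_le.mpr
    ⟨by simp only [Qf]; nlinarith [sq_nonneg (x 0), sq_nonneg (x 1), sq_nonneg (x 2)],
     by simp only [Qf]; nlinarith [sq_nonneg (x 0), sq_nonneg (x 1), sq_nonneg (x 2)]⟩
  unfold f1
  rw [abs_mul, abs_mul, abs_inv, abs_pow, abs_of_pos hq]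
  calc |x 1| * |(x 0)^2 - (x 1)^2 - (x 2)^2 - 1| * ((Qf x)^2)⁻¹
      ≤ ‖x‖ * Qf x * ((Qf x)^2)⁻¹ := by gcongr
    _ = ‖x‖ / Qf x := by field_simp

lemma A10_norm_le (x : E3) : ‖A10 x‖ ≤ 4 / (1 + ‖x‖) := by
  have hq := Qf_pos x
  have hQ : Qf x = ‖x‖^2 + 1 := by rw [norm_sq_eq]; rfl
  calc ‖A10 x‖ ≤ |A10 x 0| + |A10 x 1| + |A10 x 2| := norm_le_sum _
    _ = |f0 x| + |f1 x| + 0 := by rw [A10_apply_0, A10_apply_1, A10_apply_2, abs_zero]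
    _ ≤ ‖x‖ / Qf x + ‖x‖ / Qf x + 0 := by
        gcongr <;> [exact abs_f0_le x; exact abs_f1_le x]
    _ ≤ 4 / (1 + ‖x‖) := by
        rw [← add_div, add_zero, hQ,
          div_le_div_iff₀ (by positivity) (by positivity)]
        nlinarith [sq_nonneg (‖x‖ - 1), norm_nonneg x, sq_nonneg ‖x‖]

lemma A10_tendsto : Tendsto A10 (cocompact E3) (𝓝 0) := by
  apply squeeze_zero_norm A10_norm_le
  have h1 : Tendsto (fun s : ℝ => 4 / (1 + s)) atTop (𝓝 0) :=
    tendsto_const_nhds.div_atTop (tendsto_atTop_add_const_left _ 1 tendsto_id)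
  exact h1.comp tendsto_norm_cocompact_atTop

lemma A10_axis (t : ℝ) : A10 (WithLp.toLp 2 ![t, 0, 0] : E3) = (WithLp.toLp 2 ![t / (t ^ 2 + 1), 0, 0] : E3) := by
  have h : t^2 + 1 ≠ 0 := by positivity
  ext i
  fin_cases i
  · show A10 (WithLp.toLp 2 ![t, 0, 0] : E3) 0 = t / (t^2+1)
    rw [A10_apply_0]
    simp only [f0, Qf, Matrix.cons_val_zero, Matrix.cons_val_one, Matrix.head_cons,
      Matrix.cons_val_two, Matrix.tail_cons]
    field_simp
    ring
  · show A10 (WithLp.toLp 2 ![t, 0, 0] : E3) 1 = 0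
    rw [A10_apply_1]
    simp [f1, Qf]
  · show A10 (WithLp.toLp 2 ![t, 0, 0] : E3) 2 = 0
    exact A10_apply_2 _

lemma axis_norm {r : ℝ} (hr : 0 ≤ r) {x : E3} (hx : x = WithLp.toLp 2 ![r, 0, 0]) : ‖x‖ = r := by
  have h2 : ‖x‖^2 = r^2 := by
    rw [norm_sq_eq]
    subst hx
    norm_num
    rfl
  rw [← Real.sqrt_sq (norm_nonneg x), h2, Real.sqrt_sq hr]

lemma dot_axis {r : ℝ} {x : E3} (hx : x = WithLp.toLp 2 ![r, 0, 0]) :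
    dot3 (A10 x) x = r / (r^2 + 1) * r := by
  subst hx
  rw [dot3, A10_axis]
  rw [show (inner ℝ : E3 → E3 → ℝ) = fun a b => ∑ i, a i * b i from ?_]
  · norm_num [Fin.sum_univ_three]
    simp
  · funext a b
    rw [PiLp.inner_apply]
    norm_num [RCLike.inner_apply]
    exact Finset.sum_congr rfl fun i _ => mul_comm _ _

lemma sup_lower (r : ℝ) (hr : 0 ≤ r) : ENNReal.ofReal (r / (r ^ 2 + 1)) ≤
    ⨆ x ∈ {x : E3 | r ≤ ‖x‖}, ENNReal.ofReal (|dot3 (A10 x) x| / ‖x‖) := by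
  rcases eq_or_lt_of_le hr with heq | hpos
  · rw [← heq]
    norm_num
  set x0 : E3 := WithLp.toLp 2 ![r, 0, 0] with hx0
  have hnorm : ‖x0‖ = r := axis_norm hr hx0
  have hmem : x0 ∈ {x : E3 | r ≤ ‖x‖} := by rw [Set.mem_setOf_eq, hnorm]
  have hval : |dot3 (A10 x0) x0| / ‖x0‖ = r / (r^2 + 1) := by
    rw [dot_axis hx0, hnorm, abs_of_nonneg (by positivity)]
    field_simp
  calc ENNReal.ofReal (r / (r ^ 2 + 1)) = ENNReal.ofReal (|dot3 (A10 x0) x0| / ‖x0‖) := by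
        rw [hval]
    _ ≤ ⨆ x ∈ {x : E3 | r ≤ ‖x‖}, ENNReal.ofReal (|dot3 (A10 x) x| / ‖x‖) :=
        le_iSup₂ (f := fun (x : E3) (_ : x ∈ {x : E3 | r ≤ ‖x‖}) =>
          ENNReal.ofReal (|dot3 (A10 x) x| / ‖x‖)) x0 hmem

lemma base_int_top : (∫⁻ r in Set.Ioi (1:ℝ), ENNReal.ofReal (r / (r ^ 2 + 1))) = ⊤ := by
  by_contra h
  have hmeas : AEStronglyMeasurable (fun r : ℝ => r / (r^2+1))
      (volume.restrict (Set.Ioi (1:ℝ))) := by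
    apply Continuous.aestronglyMeasurable
    exact continuous_id.div (by continuity) (fun r => by positivity)
  have hnn : 0 ≤ᵐ[volume.restrict (Set.Ioi (1:ℝ))] fun r : ℝ => r / (r^2+1) := by
    filter_upwards [ae_restrict_mem measurableSet_Ioi] with r hr
    have : (0:ℝ) < r := lt_trans one_pos hr
    positivity
  have hint : IntegrableOn (fun r : ℝ => r / (r^2+1)) (Set.Ioi 1) volume :=
    ⟨hmeas, (hasFiniteIntegral_iff_ofReal hnn).mpr (lt_top_iff_ne_top.mpr h)⟩
  have hcmp : IntegrableOn (fun r : ℝ => r⁻¹) (Set.Ioi 1) volume := by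
    apply Integrable.mono' (hint.const_mul 2)
    · exact Measurable.aestronglyMeasurable measurable_inv
    · filter_upwards [ae_restrict_mem measurableSet_Ioi] with r hr
      have h1 : (1:ℝ) < r := hr
      have h0 : (0:ℝ) < r := lt_trans one_pos h1
      rw [Real.norm_eq_abs, abs_of_nonneg (by positivity),
        show (2:ℝ)*(r/(r^2+1)) = 2*r/(r^2+1) by ring, ← one_div,
        div_le_div_iff₀ (by positivity) (by positivity)]
      nlinarith
  have hrpow : IntegrableOn (fun x : ℝ => x ^ (-1:ℝ)) (Set.Ioi 1) volume :=
    hcmp.congr_fun (fun x hx => (Real.rpow_neg_one x).symm) measurableSet_Ioi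
  rw [integrableOn_Ioi_rpow_iff one_pos] at hrpow
  norm_num at hrpow

lemma int_top : (∫⁻ r in Set.Ioi (0:ℝ),
    ⨆ x ∈ {x : E3 | r ≤ ‖x‖}, ENNReal.ofReal (|dot3 (A10 x) x| / ‖x‖)) = ⊤ := by
  refine top_unique ?_
  calc (⊤ : ℝ≥0∞) = ∫⁻ r in Set.Ioi (1:ℝ), ENNReal.ofReal (r / (r ^ 2 + 1)) :=
        base_int_top.symm
    _ ≤ ∫⁻ r in Set.Ioi (1:ℝ),
        ⨆ x ∈ {x : E3 | r ≤ ‖x‖}, ENNReal.ofReal (|dot3 (A10 x) x| / ‖x‖) := by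
        refine lintegral_mono fun r => ?_
        rcases le_or_gt 0 r with h | h
        · exact sup_lower r h
        · have : r / (r^2+1) ≤ 0 := by
            apply div_nonpos_of_nonpos_of_nonneg h.le
            positivity
          simp [ENNReal.ofReal_eq_zero.mpr this]
    _ ≤ ∫⁻ r in Set.Ioi (0:ℝ),
        ⨆ x ∈ {x : E3 | r ≤ ‖x‖}, ENNReal.ofReal (|dot3 (A10 x) x| / ‖x‖) :=
        lintegral_mono' (Measure.restrict_mono (Set.Ioi_subset_Ioi (by norm_num)) le_rfl) le_rfl

/-- A divergence-free smooth Coulomb-gauge potential of a medium-decay field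
which is not of medium range (Proposition PC.3, counterexample). -/
theorem statement10 :
    ContDiff ℝ (⊤ : ℕ∞) A10 ∧
    (∀ x : E3, pderiv3 A10 0 0 x + pderiv3 A10 1 1 x + pderiv3 A10 2 2 x = 0) ∧
    Tendsto A10 (cocompact E3) (𝓝 0) ∧
    ContDiff ℝ (⊤ : ℕ∞) (curl3 A10) ∧
    (∃ C : ℝ, ∀ x : E3, ‖curl3 A10 x‖ ≤ C * (1 + ‖x‖) ^ (-(2:ℝ))) ∧
    (∀ t : ℝ, A10 (WithLp.toLp 2 ![t, 0, 0] : E3) = (WithLp.toLp 2 ![t / (t ^ 2 + 1), 0, 0] : E3)) ∧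
    (∀ r : ℝ, 0 ≤ r → ENNReal.ofReal (r / (r ^ 2 + 1)) ≤
      ⨆ x ∈ {x : E3 | r ≤ ‖x‖}, ENNReal.ofReal (|dot3 (A10 x) x| / ‖x‖)) ∧
    (∫⁻ r in Set.Ioi (0:ℝ),
      ⨆ x ∈ {x : E3 | r ≤ ‖x‖}, ENNReal.ofReal (|dot3 (A10 x) x| / ‖x‖)) = ⊤ := by
  refine ⟨A10_contDiff, div_A10, A10_tendsto, ?_, ⟨48, fun x => ?_⟩, A10_axis, sup_lower, int_top⟩
  · rw [curl_A10_eq]; exact B10_contDiff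
  · rw [curl_A10_eq]; exact B10_norm_le x
end
end

section
/- Let ν ∈ ℕ, ν ≥ 1, and let 0 < α < ν, 0 < β < ν with α + β > ν. Then there exists a constant C = C_{α,β;ν} > 0 such that for every x ∈ ℝ^ν with x ≠ 0, the function y ↦ |y|^{−α}·|x−y|^{−β} is integrable on ℝ^ν and ∫_{ℝ^ν} |y|^{−α}·|x−y|^{−β} dy = C·|x|^{−(α+β−ν)}. -/
/-!
With `r = ‖x‖ / 2`, the larger of `‖y‖` and `‖x - y‖` is at least `r`, so the integrand is
dominated by `‖y‖^(-α) max(r, ‖y‖)^(-β) + ‖x - y‖^(-β) max(r, ‖x - y‖)^(-α)`. Each summand is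
integrable near its singularity because `α, β < ν` and at infinity because `α + β > ν`.
The change of variables `y = c z` makes the integral homogeneous of degree `ν - α - β` in `x`,
and a reflection carrying one vector to another of the same norm shows that it only depends on
`‖x‖`. Hence it is `‖x‖^(ν - α - β)` times its value at a unit vector, which is positive because
the integrand is positive off the null set `{0, x}`.
-/

open MeasureTheory Metric Set Module

lemma Real.rpow_neg_mul_rpow_neg_le_add {a b r α β : ℝ} (ha : 0 ≤ a) (hb : 0 ≤ b) (hr : 0 < r)
    (hab : 2 * r ≤ a + b) (hα : 0 ≤ α) (hβ : 0 ≤ β) :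
    a ^ (-α) * b ^ (-β) ≤ a ^ (-α) * max r a ^ (-β) + b ^ (-β) * max r b ^ (-α) := by
  have hra : 0 < max r a := lt_max_of_lt_left hr
  have hrb : 0 < max r b := lt_max_of_lt_left hr
  rcases le_total a b with h | h
  · have hb' : b ^ (-β) ≤ max r a ^ (-β) :=
      Real.rpow_le_rpow_of_nonpos hra (max_le (by linarith) h) (by linarith)
    calc a ^ (-α) * b ^ (-β) ≤ a ^ (-α) * max r a ^ (-β) := by gcongr
      _ ≤ _ := le_add_of_nonneg_right (by positivity)
  · have ha' : a ^ (-α) ≤ max r b ^ (-α) :=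
      Real.rpow_le_rpow_of_nonpos hrb (max_le (by linarith) h) (by linarith)
    calc a ^ (-α) * b ^ (-β) ≤ b ^ (-β) * max r b ^ (-α) := by
          rw [mul_comm]; gcongr
      _ ≤ _ := le_add_of_nonneg_left (by positivity)

section AddHaar

variable {E : Type*} [NormedAddCommGroup E] [NormedSpace ℝ E] [FiniteDimensional ℝ E]
  [MeasurableSpace E] [BorelSpace E] {μ : Measure E} [μ.IsAddHaarMeasure]

lemma locallyIntegrable_rpow_neg_norm {s : ℝ} (hs : s < finrank ℝ E) :
    LocallyIntegrable (fun y : E ↦ ‖y‖ ^ (-s)) μ := by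
  rcases (finrank ℝ E).eq_zero_or_pos with h | h
  · have : Subsingleton E := finrank_zero_iff.mp h
    have hconst : (fun y : E ↦ ‖y‖ ^ (-s)) = fun _ ↦ ‖(0 : E)‖ ^ (-s) := by
      ext y; rw [Subsingleton.elim y 0]
    rw [hconst]
    exact locallyIntegrable_const _
  · refine locallyIntegrable_of_norm_le_rpow (C := 1) h hs (ae_of_all _ fun y ↦ ?_)
      (measurable_norm.pow_const _).aestronglyMeasurable
    rw [one_mul, Real.norm_of_nonneg (by positivity)]

lemma integrableOn_compl_closedBall_rpow_neg_norm {s r : ℝ} (hs : finrank ℝ E < s) (hr : 0 < r) :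
    IntegrableOn (fun y : E ↦ ‖y‖ ^ (-s)) (closedBall 0 r)ᶜ μ := by
  have hs0 : 0 < s := lt_of_le_of_lt (Nat.cast_nonneg _) hs
  refine Integrable.mono' ((integrable_one_add_norm hs).const_mul ((1 + r⁻¹) ^ s)).integrableOn
    (measurable_norm.pow_const _).aestronglyMeasurable ?_
  filter_upwards [ae_restrict_mem measurableSet_closedBall.compl] with y hy
  have hry : r < ‖y‖ := by simpa using hy
  have hy0 : 0 < ‖y‖ := hr.trans hry
  have hle : 1 + ‖y‖ ≤ (1 + r⁻¹) * ‖y‖ := by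
    have : 1 ≤ r⁻¹ * ‖y‖ := by rw [← div_eq_inv_mul, le_div_iff₀ hr]; linarith
    linarith
  rw [Real.norm_of_nonneg (by positivity)]
  calc ‖y‖ ^ (-s) = (1 + r⁻¹) ^ s * ((1 + r⁻¹) * ‖y‖) ^ (-s) := by
        rw [Real.mul_rpow (by positivity) hy0.le, Real.rpow_neg (by positivity : (0:ℝ) ≤ 1 + r⁻¹),
          ← mul_assoc, mul_inv_cancel₀ (by positivity), one_mul]
    _ ≤ (1 + r⁻¹) ^ s * (1 + ‖y‖) ^ (-s) :=
        mul_le_mul_of_nonneg_left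
          (Real.rpow_le_rpow_of_nonpos (by positivity) hle (by linarith)) (by positivity)

lemma integrable_rpow_neg_norm_mul_max_rpow_neg {α β r : ℝ} (hα : α < finrank ℝ E)
    (hαβ : finrank ℝ E < α + β) (hr : 0 < r) :
    Integrable (fun y : E ↦ ‖y‖ ^ (-α) * max r ‖y‖ ^ (-β)) μ := by
  rw [← integrableOn_univ, ← union_compl_self (closedBall (0 : E) r)]
  refine IntegrableOn.union ?_ ?_
  · refine IntegrableOn.congr_fun (((locallyIntegrable_rpow_neg_norm hα).integrableOn_isCompact
      (isCompact_closedBall 0 r)).mul_const (r ^ (-β))) (fun y hy ↦ ?_) measurableSet_closedBall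
    rw [max_eq_left (by simpa using hy)]
  · refine (integrableOn_compl_closedBall_rpow_neg_norm hαβ hr).congr_fun (fun y hy ↦ ?_)
      measurableSet_closedBall.compl
    have hry : r < ‖y‖ := by simpa using hy
    dsimp only
    rw [max_eq_right hry.le, neg_add, Real.rpow_add (hr.trans hry)]

theorem integrable_rpow_neg_norm_mul_rpow_neg_norm_sub {α β : ℝ} (hα0 : 0 ≤ α)
    (hα : α < finrank ℝ E) (hβ0 : 0 ≤ β) (hβ : β < finrank ℝ E) (hαβ : finrank ℝ E < α + β)
    {x : E} (hx : x ≠ 0) :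
    Integrable (fun y : E ↦ ‖y‖ ^ (-α) * ‖x - y‖ ^ (-β)) μ := by
  set r := ‖x‖ / 2
  have hr : 0 < r := by positivity
  have hdom := (integrable_rpow_neg_norm_mul_max_rpow_neg (μ := μ) hα hαβ hr).add
    ((integrable_rpow_neg_norm_mul_max_rpow_neg (μ := μ) hβ
      (show (finrank ℝ E : ℝ) < β + α by linarith) hr).comp_sub_left x)
  refine hdom.mono' (by fun_prop) (ae_of_all _ fun y ↦ ?_)
  rw [Real.norm_of_nonneg (by positivity)]
  refine Real.rpow_neg_mul_rpow_neg_le_add (norm_nonneg _) (norm_nonneg _) hr ?_ hα0 hβ0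
  calc 2 * r = ‖y + (x - y)‖ := by rw [add_sub_cancel]; ring
    _ ≤ ‖y‖ + ‖x - y‖ := norm_add_le _ _

lemma integral_rpow_neg_norm_mul_rpow_neg_norm_smul_sub (α β : ℝ) {c : ℝ} (hc : 0 < c) (x : E) :
    ∫ y, ‖y‖ ^ (-α) * ‖c • x - y‖ ^ (-β) ∂μ
      = c ^ (finrank ℝ E - α - β) * ∫ y, ‖y‖ ^ (-α) * ‖x - y‖ ^ (-β) ∂μ := by
  have hscale := Measure.integral_comp_smul_of_nonneg μ
    (fun y : E ↦ ‖y‖ ^ (-α) * ‖c • x - y‖ ^ (-β)) c (hR := hc.le)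
  have hpoint : ∀ y : E, ‖c • y‖ ^ (-α) * ‖c • x - c • y‖ ^ (-β)
      = c ^ (-α) * c ^ (-β) * (‖y‖ ^ (-α) * ‖x - y‖ ^ (-β)) := by
    intro y
    rw [← smul_sub, norm_smul, norm_smul, Real.norm_of_nonneg hc.le,
      Real.mul_rpow hc.le (norm_nonneg _), Real.mul_rpow hc.le (norm_nonneg _)]
    ring
  simp only [hpoint, integral_const_mul, smul_eq_mul] at hscale
  rw [eq_inv_mul_iff_mul_eq₀ (by positivity)] at hscale
  rw [← hscale, ← mul_assoc, ← mul_assoc, ← Real.rpow_natCast, ← Real.rpow_add hc,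
    ← Real.rpow_add hc]
  ring_nf

lemma integral_rpow_neg_norm_mul_rpow_neg_norm_sub_pos {α β : ℝ} {x : E} (hx : x ≠ 0)
    (hint : Integrable (fun y : E ↦ ‖y‖ ^ (-α) * ‖x - y‖ ^ (-β)) μ) :
    0 < ∫ y, ‖y‖ ^ (-α) * ‖x - y‖ ^ (-β) ∂μ := by
  have : Nontrivial E := nontrivial_of_ne x 0 hx
  rw [integral_pos_iff_support_of_nonneg (fun y ↦ by positivity) hint]
  have hsupp : ({0, x} : Set E)ᶜ ⊆ Function.support fun y : E ↦ ‖y‖ ^ (-α) * ‖x - y‖ ^ (-β) := by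
    intro y hy
    simp only [mem_compl_iff, mem_insert_iff, mem_singleton_iff, not_or] at hy
    exact (mul_pos (Real.rpow_pos_of_pos (norm_pos_iff.2 hy.1) _)
      (Real.rpow_pos_of_pos (norm_pos_iff.2 (sub_ne_zero.2 (Ne.symm hy.2))) _)).ne'
  calc 0 < μ univ := Measure.measure_univ_pos.2 (NeZero.ne μ)
    _ = μ ({0, x} : Set E)ᶜ := by
        rw [compl_eq_univ_sdiff, measure_sdiff_null (Set.Finite.measure_zero (by simp) μ)]
    _ ≤ _ := measure_mono hsupp

end AddHaar

section InnerProductSpace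

variable {E : Type*} [NormedAddCommGroup E] [InnerProductSpace ℝ E] [FiniteDimensional ℝ E]
  [MeasurableSpace E] [BorelSpace E]

lemma integral_rpow_neg_norm_mul_rpow_neg_norm_sub_congr_norm (α β : ℝ) {x x' : E}
    (h : ‖x‖ = ‖x'‖) :
    ∫ y, ‖y‖ ^ (-α) * ‖x - y‖ ^ (-β) = ∫ y, ‖y‖ ^ (-α) * ‖x' - y‖ ^ (-β) := by
  set R := Submodule.reflection (ℝ ∙ (x' - x))ᗮ
  have hR : R x' = x := Submodule.reflection_sub h.symm
  rw [← (R.measurePreserving).integral_comp R.toHomeomorph.measurableEmbedding]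
  congr 1 with y
  rw [← hR, ← map_sub, LinearIsometryEquiv.norm_map, LinearIsometryEquiv.norm_map]


lemma integral_rpow_neg_norm_mul_rpow_neg_norm_sub_eq_norm_rpow_mul (α β : ℝ) {e x : E}
    (he : ‖e‖ = 1) (hx : x ≠ 0) :
    ∫ y, ‖y‖ ^ (-α) * ‖x - y‖ ^ (-β)
      = ‖x‖ ^ (finrank ℝ E - α - β) * ∫ y, ‖y‖ ^ (-α) * ‖e - y‖ ^ (-β) := by
  have hx' : ‖x‖ ≠ 0 := norm_ne_zero_iff.2 hx
  have hunit : ‖‖x‖⁻¹ • x‖ = ‖e‖ := by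
    rw [norm_smul, norm_inv, norm_norm, inv_mul_cancel₀ hx', he]
  calc ∫ y, ‖y‖ ^ (-α) * ‖x - y‖ ^ (-β)
      = ∫ y, ‖y‖ ^ (-α) * ‖‖x‖ • (‖x‖⁻¹ • x) - y‖ ^ (-β) := by rw [smul_inv_smul₀ hx']
    _ = _ := by
      rw [integral_rpow_neg_norm_mul_rpow_neg_norm_smul_sub α β (norm_pos_iff.2 hx),
        integral_rpow_neg_norm_mul_rpow_neg_norm_sub_congr_norm α β hunit]

end InnerProductSpace

/-- Convolution of Riesz potentials (Lemma Lrp):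
`|x|^{−α} * |x|^{−β} = C_{α,β;ν} |x|^{−(α+β−ν)}` on `ℝ^ν`. -/
theorem statement13 (ν : ℕ) (hν : 1 ≤ ν) (α β : ℝ)
    (hα0 : 0 < α) (hαν : α < ν) (hβ0 : 0 < β) (hβν : β < ν)
    (hαβ : (ν : ℝ) < α + β) :
    ∃ C > (0:ℝ), ∀ x : EuclideanSpace ℝ (Fin ν), x ≠ 0 →
      Integrable (fun y : EuclideanSpace ℝ (Fin ν) => ‖y‖ ^ (-α) * ‖x - y‖ ^ (-β)) volume ∧
      (∫ y : EuclideanSpace ℝ (Fin ν), ‖y‖ ^ (-α) * ‖x - y‖ ^ (-β))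
        = C * ‖x‖ ^ (-(α + β - ν)) := by
  have hdim : finrank ℝ (EuclideanSpace ℝ (Fin ν)) = ν := finrank_euclideanSpace_fin
  have hint : ∀ x : EuclideanSpace ℝ (Fin ν), x ≠ 0 →
      Integrable (fun y : EuclideanSpace ℝ (Fin ν) => ‖y‖ ^ (-α) * ‖x - y‖ ^ (-β)) volume :=
    fun x hx ↦ integrable_rpow_neg_norm_mul_rpow_neg_norm_sub hα0.le (by rwa [hdim]) hβ0.le
      (by rwa [hdim]) (by rwa [hdim]) hx
  set e := EuclideanSpace.single (⟨0, hν⟩ : Fin ν) (1 : ℝ)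
  have he : ‖e‖ = 1 := by simp [e]
  have he0 : e ≠ 0 := norm_ne_zero_iff.1 (by rw [he]; exact one_ne_zero)
  refine ⟨_, integral_rpow_neg_norm_mul_rpow_neg_norm_sub_pos he0 (hint e he0),
    fun x hx ↦ ⟨hint x hx, ?_⟩⟩
  rw [integral_rpow_neg_norm_mul_rpow_neg_norm_sub_eq_norm_rpow_mul α β he hx, mul_comm, hdim]
  ring_nf
end

section
/- Let A ∈ C¹(ℝ³, ℝ³) be a vector potential of medium range such that |∂_i A_k(x)| ≤ C(1+|x|)^{−μ̃} for all i, k with some μ̃ > 1, and set B := curl A (a continuous field). Let ω, ω̃ ∈ S² be unit vectors and x ∈ ℝ³, and assume the improper integrals a(ω,y) := lim_{T→∞} ∫_{−T}^{T} ω·A(y+ω·t) dt exist for all y. Then the function u ↦ a(ω, x + ω̃·u) is differentiable and (d/du) ∫_{−∞}^∞ ω·A(x + ω̃·u + ω·t) dt = ∫_{−∞}^∞ (ω̃ × ω)·B(x + ω̃·u + ω·t) dt, where the right-hand integrand is absolutely integrable. -/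
open MeasureTheory Filter Topology
open scoped ENNReal

noncomputable section

/-!
Write `y v = x + v • ωt`. Differentiating under the truncated integral and using the pointwise
identity `ω · ∂_{ωt} A = (ωt × ω) · curl A + ∂_ω (ωt · A)` gives
`d/dv ∫_{-T}^{T} ω · A (y v + t ω) dt
  = ∫_{-T}^{T} (ωt × ω) · B (y v + t ω) dt + [ωt · A (y v + t ω)]_{t=-T}^{T}`.
For `v` near `u` the curl term is dominated by the integrable `(1 + |t|)^(-μ')` and the boundary
terms vanish as `T → ∞` by the decay of `A`, both uniformly in `v`; uniform convergence of the
derivatives then passes the derivative to the limit `a (y v)`.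
-/

open Bornology Metric Set

section Euclidean

variable {ι κ : Type*} [Fintype ι] [DecidableEq ι]

lemma EuclideanSpace.clm_apply_eq_sum {F : Type*} [AddCommGroup F] [Module ℝ F]
    [TopologicalSpace F] (L : EuclideanSpace ℝ ι →L[ℝ] F) (w : EuclideanSpace ℝ ι) :
    L w = ∑ i, w i • L (EuclideanSpace.single i 1) := by
  conv_lhs => rw [← (EuclideanSpace.basisFun ι ℝ).sum_repr w]
  simp [map_sum, map_smul]

lemma EuclideanSpace.clm_apply_apply_eq_sum (L : EuclideanSpace ℝ ι →L[ℝ] EuclideanSpace ℝ κ)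
    (w : EuclideanSpace ℝ ι) (k : κ) :
    L w k = ∑ i, w i * L (EuclideanSpace.single i 1) k := by
  conv_lhs => rw [EuclideanSpace.clm_apply_eq_sum L w]
  simp

lemma abs_inner_clm_apply_le [Fintype κ] (L : EuclideanSpace ℝ ι →L[ℝ] EuclideanSpace ℝ κ)
    {M : ℝ} (hL : ∀ i k, |L (EuclideanSpace.single i 1) k| ≤ M) (c : EuclideanSpace ℝ κ)
    (w : EuclideanSpace ℝ ι) :
    |inner ℝ c (L w)| ≤ (∑ k, |c k|) * (∑ i, |w i|) * M := by
  calc |inner ℝ c (L w)| = |∑ k, ∑ i, c k * w i * L (EuclideanSpace.single i 1) k| := by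
        simp [PiLp.inner_apply, EuclideanSpace.clm_apply_apply_eq_sum L w, Finset.mul_sum,
          mul_assoc, mul_comm]
    _ ≤ ∑ k, ∑ i, |c k * w i * L (EuclideanSpace.single i 1) k| :=
        (Finset.abs_sum_le_sum_abs _ _).trans
          (Finset.sum_le_sum fun k _ => Finset.abs_sum_le_sum_abs _ _)
    _ ≤ ∑ k, ∑ i, |c k| * |w i| * M := by
        gcongr with k _ i _
        rw [abs_mul, abs_mul]
        gcongr
        exact hL i k
    _ = (∑ k, |c k|) * (∑ i, |w i|) * M := by
        rw [Finset.sum_mul_sum]; simp only [Finset.sum_mul]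

end Euclidean

lemma dot3_eq (a b : E3) : dot3 a b = a 0 * b 0 + a 1 * b 1 + a 2 * b 2 := by
  simp [dot3, PiLp.inner_apply, Fin.sum_univ_three, mul_comm]

lemma dot3_fderiv_eq_cross3_dot3_curl3_add (A : E3 → E3) (p ω ωt : E3) :
    dot3 ω (fderiv ℝ A p ωt) = dot3 (cross3 ωt ω) (curl3 A p) + dot3 ωt (fderiv ℝ A p ω) := by
  simp only [dot3_eq, EuclideanSpace.clm_apply_apply_eq_sum (fderiv ℝ A p) ωt,
    EuclideanSpace.clm_apply_apply_eq_sum (fderiv ℝ A p) ω, Fin.sum_univ_three,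
    cross3, curl3, pderiv3, Matrix.cons_val_zero, Matrix.cons_val_one,
    Matrix.cons_val_two, Matrix.head_cons, Matrix.tail_cons]
  ring

section Normed

variable {E F : Type*} [NormedAddCommGroup E] [NormedAddCommGroup F]

lemma tendsto_cobounded_zero_of_norm_le_rpow_neg {f : E → F} {C μ R : ℝ} (hμ : 0 < μ)
    (hf : ∀ x, R ≤ ‖x‖ → ‖f x‖ ≤ C * ‖x‖ ^ (-μ)) : Tendsto f (cobounded E) (𝓝 0) := by
  have hdecay : Tendsto (fun x : E => C * ‖x‖ ^ (-μ)) (cobounded E) (𝓝 0) := by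
    simpa using ((tendsto_rpow_neg_atTop hμ).comp tendsto_norm_cobounded_atTop).const_mul C
  exact squeeze_zero_norm' ((eventually_cobounded_le_norm R).mono hf) hdecay

variable [NormedSpace ℝ E]

lemma one_add_norm_add_smul_rpow_neg_le {y ω : E} (hω : ‖ω‖ = 1) {c μ : ℝ} (hy : ‖y‖ ≤ c)
    (hμ : 0 ≤ μ) (t : ℝ) :
    (1 + ‖y + t • ω‖) ^ (-μ) ≤ (1 + c) ^ μ * (1 + |t|) ^ (-μ) := by
  have hc : 0 ≤ c := (norm_nonneg y).trans hy
  have ht : |t| ≤ ‖y + t • ω‖ + c := by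
    have := norm_le_add_norm_add' y (t • ω)
    rw [norm_smul, hω, mul_one, Real.norm_eq_abs] at this
    linarith
  have hprod : 1 + |t| ≤ (1 + ‖y + t • ω‖) * (1 + c) := by
    nlinarith [norm_nonneg (y + t • ω)]
  rw [Real.rpow_neg (by positivity), Real.rpow_neg (by positivity), ← div_eq_mul_inv,
    le_div_iff₀ (by positivity), inv_mul_le_iff₀ (by positivity),
    ← Real.mul_rpow (by positivity) (by positivity)]
  exact Real.rpow_le_rpow (by positivity) hprod hμ

lemma tendstoUniformlyOn_comp_add_smul_atTop {α : Type*} {f : E → F}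
    (hf : Tendsto f (cobounded E) (𝓝 0)) {ω : E} (hω : ω ≠ 0) {y : α → E} {s : Set α} {c : ℝ}
    (hy : ∀ v ∈ s, ‖y v‖ ≤ c) :
    TendstoUniformlyOn (fun (T : ℝ) v => f (y v + T • ω)) 0 atTop s := by
  rw [Metric.tendstoUniformlyOn_iff]
  intro ε hε
  obtain ⟨R, -, hR⟩ := (Filter.hasBasis_cobounded_norm.tendsto_iff nhds_basis_ball).1 hf ε hε
  filter_upwards [eventually_ge_atTop ((R + c) / ‖ω‖), eventually_ge_atTop (0 : ℝ)]
    with T hT hT0 v hv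
  have hRT : R ≤ ‖y v + T • ω‖ := by
    have := norm_le_add_norm_add' (y v) (T • ω)
    rw [norm_smul, Real.norm_of_nonneg hT0] at this
    rw [div_le_iff₀ (norm_pos_iff.2 hω)] at hT
    linarith [hy v hv]
  simpa [dist_comm] using hR _ hRT

end Normed

section Integrals

variable {E : Type*} [NormedAddCommGroup E] [NormedSpace ℝ E]

lemma integral_sub_intervalIntegral_eq_setIntegral_compl {h : ℝ → E} (hh : Integrable h) {T : ℝ}
    (hT : 0 ≤ T) : (∫ t, h t) - ∫ t in -T..T, h t = ∫ t in (Ioc (-T) T)ᶜ, h t := by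
  rw [intervalIntegral.integral_of_le (by linarith), sub_eq_iff_eq_add',
    integral_add_compl measurableSet_Ioc hh]

lemma tendstoUniformlyOn_intervalIntegral_integral {α : Type*} {f : α → ℝ → E} {g : ℝ → ℝ}
    {s : Set α} (hg : Integrable g) (hf : ∀ v ∈ s, AEStronglyMeasurable (f v))
    (hfg : ∀ v ∈ s, ∀ t, ‖f v t‖ ≤ g t) :
    TendstoUniformlyOn (fun (T : ℝ) v => ∫ t in -T..T, f v t) (fun v => ∫ t, f v t) atTop s := by
  have hgT : Tendsto (fun T : ℝ => (∫ t, g t) - ∫ t in -T..T, g t) atTop (𝓝 0) := by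
    simpa using (intervalIntegral_tendsto_integral hg tendsto_neg_atTop_atBot
      tendsto_id).const_sub (∫ t, g t)
  rw [Metric.tendstoUniformlyOn_iff]
  intro ε hε
  filter_upwards [hgT.eventually (gt_mem_nhds hε), eventually_ge_atTop (0 : ℝ)] with T hT hT0 v hv
  have hfi : Integrable (f v) := hg.mono' (hf v hv) (ae_of_all _ (hfg v hv))
  calc dist (∫ t, f v t) (∫ t in -T..T, f v t)
      = ‖∫ t in (Ioc (-T) T)ᶜ, f v t‖ := by
        rw [dist_eq_norm, integral_sub_intervalIntegral_eq_setIntegral_compl hfi hT0]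
    _ ≤ ∫ t in (Ioc (-T) T)ᶜ, g t :=
        norm_integral_le_of_norm_le hg.integrableOn (ae_of_all _ (hfg v hv))
    _ = (∫ t, g t) - ∫ t in -T..T, g t :=
        (integral_sub_intervalIntegral_eq_setIntegral_compl hg hT0).symm
    _ < ε := hT

lemma hasDerivAt_intervalIntegral_of_continuous_deriv {F F' : ℝ → ℝ → E}
    (hF : Continuous (Function.uncurry F)) (hF' : Continuous (Function.uncurry F'))
    (hderiv : ∀ w t, HasDerivAt (F · t) (F' w t) w) (a b v : ℝ) :
    HasDerivAt (fun w => ∫ t in a..b, F w t) (∫ t in a..b, F' v t) v := by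
  obtain ⟨B, hB⟩ := ((isCompact_closedBall v 1).prod isCompact_uIcc).exists_bound_of_continuousOn
    hF'.continuousOn
  have hsection : ∀ {G : ℝ → ℝ → E}, Continuous (Function.uncurry G) → ∀ w, Continuous (G w) :=
    fun hG w => hG.comp (continuous_const.prodMk continuous_id)
  refine (intervalIntegral.hasDerivAt_integral_of_dominated_loc_of_deriv_le (bound := fun _ => B)
    (ball_mem_nhds v one_pos) (Eventually.of_forall fun w => (hsection hF w).aestronglyMeasurable)
    ((hsection hF v).intervalIntegrable a b) (hsection hF' v).aestronglyMeasurable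
    (ae_of_all _ fun t ht w hw => hB (w, t) ⟨ball_subset_closedBall hw, uIoc_subset_uIcc ht⟩)
    intervalIntegrable_const (ae_of_all _ fun t _ w _ => hderiv w t)).2

end Integrals

section Potential

variable {A : E3 → E3}

lemma hasDerivAt_dot3_comp_add_smul (hA : Differentiable ℝ A) (c y w : E3) (v : ℝ) :
    HasDerivAt (fun v : ℝ => dot3 c (A (y + v • w))) (dot3 c (fderiv ℝ A (y + v • w) w)) v := by
  have hline : HasDerivAt (fun v : ℝ => y + v • w) w v := by
    simpa using ((hasDerivAt_id v).smul_const w).const_add y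
  simpa [dot3, Function.comp_def] using
    (innerSL ℝ c).hasFDerivAt.comp_hasDerivAt v ((hA _).hasFDerivAt.comp_hasDerivAt v hline)

lemma continuous_dot3 {α : Type*} [TopologicalSpace α] (c : E3) {g : α → E3}
    (hg : Continuous g) : Continuous fun t => dot3 c (g t) :=
  continuous_const.inner hg

lemma continuous_curl3 (hA : ContDiff ℝ 1 A) : Continuous (curl3 A) := by
  have hpderiv : ∀ i k, Continuous (pderiv3 A i k) := fun i k =>
    (continuous_apply k).comp ((PiLp.continuous_ofLp 2 _).comp
      ((hA.continuous_fderiv one_ne_zero).clm_apply continuous_const))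
  refine (PiLp.continuous_toLp 2 _).comp (continuous_pi fun i => ?_)
  fin_cases i <;> exact (hpderiv _ _).sub (hpderiv _ _)

lemma intervalIntegral_dot3_fderiv_eq (hA : ContDiff ℝ 1 A) (y ω ωt : E3) (a b : ℝ) :
    ∫ t in a..b, dot3 ω (fderiv ℝ A (y + t • ω) ωt)
      = (∫ t in a..b, dot3 (cross3 ωt ω) (curl3 A (y + t • ω)))
        + (dot3 ωt (A (y + b • ω)) - dot3 ωt (A (y + a • ω))) := by
  have hline : Continuous fun t : ℝ => y + t • ω := by fun_prop
  have hfderiv : Continuous fun t : ℝ => dot3 ωt (fderiv ℝ A (y + t • ω) ω) :=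
    continuous_dot3 ωt (((hA.continuous_fderiv one_ne_zero).comp' hline).clm_apply
      continuous_const)
  simp_rw [dot3_fderiv_eq_cross3_dot3_curl3_add A _ ω ωt]
  rw [intervalIntegral.integral_add
      ((continuous_dot3 _ ((continuous_curl3 hA).comp' hline)).intervalIntegrable a b)
      (hfderiv.intervalIntegrable a b),
    intervalIntegral.integral_eq_sub_of_hasDerivAt
      (fun t _ => hasDerivAt_dot3_comp_add_smul (hA.differentiable one_ne_zero) ωt y ω t)
      (hfderiv.intervalIntegrable a b)]

lemma hasDerivAt_intervalIntegral_dot3_comp (hA : ContDiff ℝ 1 A) (x ω ωt : E3) (a b v : ℝ) :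
    HasDerivAt (fun w : ℝ => ∫ t in a..b, dot3 ω (A (x + w • ωt + t • ω)))
      (∫ t in a..b, dot3 ω (fderiv ℝ A (x + v • ωt + t • ω) ωt)) v := by
  have hplane : Continuous fun q : ℝ × ℝ => x + q.1 • ωt + q.2 • ω := by fun_prop
  refine hasDerivAt_intervalIntegral_of_continuous_deriv
    (F := fun w t => dot3 ω (A (x + w • ωt + t • ω)))
    (F' := fun w t => dot3 ω (fderiv ℝ A (x + w • ωt + t • ω) ωt))
    (continuous_dot3 ω (hA.continuous.comp' hplane))
    (continuous_dot3 ω (((hA.continuous_fderiv one_ne_zero).comp' hplane).clm_apply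
      continuous_const)) (fun w t => ?_) a b v
  have hcomm : ∀ w : ℝ, x + t • ω + w • ωt = x + w • ωt + t • ω := fun w => by abel
  simpa only [hcomm] using
    hasDerivAt_dot3_comp_add_smul (hA.differentiable one_ne_zero) ω (x + t • ω) ωt w

lemma abs_dot3_cross3_curl3_le {p : E3} {M : ℝ} (hM : ∀ i k, |pderiv3 A i k p| ≤ M)
    (ω ωt : E3) :
    |dot3 (cross3 ωt ω) (curl3 A p)| ≤ 2 * ((∑ k, |ω k|) * (∑ i, |ωt i|)) * M := by
  have hω : |dot3 ω (fderiv ℝ A p ωt)| ≤ (∑ k, |ω k|) * (∑ i, |ωt i|) * M :=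
    abs_inner_clm_apply_le (fderiv ℝ A p) hM ω ωt
  have hωt : |dot3 ωt (fderiv ℝ A p ω)| ≤ (∑ k, |ω k|) * (∑ i, |ωt i|) * M := by
    rw [mul_comm (∑ k, |ω k|)]
    exact abs_inner_clm_apply_le (fderiv ℝ A p) hM ωt ω
  rw [eq_sub_of_add_eq (dot3_fderiv_eq_cross3_dot3_curl3_add A p ω ωt).symm]
  linarith [abs_sub (dot3 ω (fderiv ℝ A p ωt)) (dot3 ωt (fderiv ℝ A p ω))]

lemma norm_dot3_cross3_curl3_add_smul_le {C μ : ℝ}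
    (hder : ∀ i k p, |pderiv3 A i k p| ≤ C * (1 + ‖p‖) ^ (-μ)) (hμ : 0 ≤ μ) {y ω : E3}
    (hω : ‖ω‖ = 1) {c : ℝ} (hy : ‖y‖ ≤ c) (ωt : E3) (t : ℝ) :
    ‖dot3 (cross3 ωt ω) (curl3 A (y + t • ω))‖
      ≤ 2 * ((∑ k, |ω k|) * (∑ i, |ωt i|)) * C * (1 + c) ^ μ * (1 + |t|) ^ (-μ) := by
  have hC : 0 ≤ C := by simpa using (abs_nonneg _).trans (hder 0 0 0)
  calc ‖dot3 (cross3 ωt ω) (curl3 A (y + t • ω))‖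
      ≤ 2 * ((∑ k, |ω k|) * (∑ i, |ωt i|)) * (C * (1 + ‖y + t • ω‖) ^ (-μ)) :=
        abs_dot3_cross3_curl3_le (fun i k => hder i k _) ω ωt
    _ ≤ 2 * ((∑ k, |ω k|) * (∑ i, |ωt i|)) * (C * ((1 + c) ^ μ * (1 + |t|) ^ (-μ))) := by
        gcongr
        exact one_add_norm_add_smul_rpow_neg_le hω hy hμ t
    _ = _ := by ring

lemma integrable_dot3_curl3_comp_add_smul (hA : ContDiff ℝ 1 A) {c y ω : E3} {g : ℝ → ℝ}
    (hg : Integrable g) (hdom : ∀ t : ℝ, ‖dot3 c (curl3 A (y + t • ω))‖ ≤ g t) :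
    Integrable fun t : ℝ => dot3 c (curl3 A (y + t • ω)) :=
  hg.mono' (continuous_dot3 c ((continuous_curl3 hA).comp' (by fun_prop))).aestronglyMeasurable
    (ae_of_all _ hdom)

lemma tendstoUniformlyOn_intervalIntegral_dot3_fderiv (hA : ContDiff ℝ 1 A)
    (hA0 : Tendsto A (cobounded E3) (𝓝 0)) {ω : E3} (hω : ω ≠ 0) (ωt : E3) {α : Type*}
    {y : α → E3} {s : Set α} {c : ℝ} (hy : ∀ v ∈ s, ‖y v‖ ≤ c) {g : ℝ → ℝ} (hg : Integrable g)
    (hdom : ∀ v ∈ s, ∀ t : ℝ, ‖dot3 (cross3 ωt ω) (curl3 A (y v + t • ω))‖ ≤ g t) :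
    TendstoUniformlyOn (fun (T : ℝ) v => ∫ t in -T..T, dot3 ω (fderiv ℝ A (y v + t • ω) ωt))
      (fun v => ∫ t : ℝ, dot3 (cross3 ωt ω) (curl3 A (y v + t • ω))) atTop s := by
  have hωtA : Tendsto (fun p => dot3 ωt (A p)) (cobounded E3) (𝓝 0) :=
    ((continuous_dot3 ωt continuous_id).tendsto' 0 0 (by simp [dot3])).comp hA0
  have hbdry : ∀ ω' : E3, ω' ≠ 0 → TendstoUniformlyOn
      (fun (T : ℝ) v => dot3 ωt (A (y v + T • ω'))) 0 atTop s := fun ω' hω' =>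
    tendstoUniformlyOn_comp_add_smul_atTop hωtA hω' hy
  have hlim := (tendstoUniformlyOn_intervalIntegral_integral hg
    (fun v hv => (integrable_dot3_curl3_comp_add_smul hA hg (hdom v hv)).aestronglyMeasurable)
    hdom).add ((hbdry ω hω).sub (hbdry (-ω) (neg_ne_zero.2 hω)))
  refine (hlim.congr (Eventually.of_forall fun T v _ => ?_)).congr_right fun v _ => by simp
  simp only [Pi.add_apply, Pi.sub_apply, smul_neg, ← neg_smul]
  rw [← intervalIntegral_dot3_fderiv_eq hA]

end Potential

theorem statement16_general (A : E3 → E3) (hA1 : ContDiff ℝ 1 A) (hAmr : IsMediumRange A)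
    (C μ' : ℝ) (hμ' : 1 < μ')
    (hder : ∀ i k : Fin 3, ∀ x : E3, |pderiv3 A i k x| ≤ C * (1 + ‖x‖) ^ (-μ'))
    (ω ωt : E3) (hω : ‖ω‖ = 1) (x : E3)
    (a : E3 → ℝ)
    (ha : ∀ y : E3,
      Tendsto (fun T : ℝ => ∫ t in -T..T, dot3 ω (A (y + t • ω))) atTop (𝓝 (a y))) :
    ∀ u : ℝ,
      Integrable
        (fun t : ℝ => dot3 (cross3 ωt ω) (curl3 A (x + u • ωt + t • ω))) volume ∧
      HasDerivAt (fun v : ℝ => a (x + v • ωt))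
        (∫ t : ℝ, dot3 (cross3 ωt ω) (curl3 A (x + u • ωt + t • ω))) u := by
  intro u
  obtain ⟨-, ⟨CA, -, μA, hμA, RA, hRA⟩, -⟩ := hAmr
  obtain ⟨c, hyc⟩ : ∃ c, ∀ v ∈ ball u 1, ‖x + v • ωt‖ ≤ c := by
    refine ⟨‖x‖ + (|u| + 1) * ‖ωt‖, fun v hv => ?_⟩
    have hv' : |v| ≤ |u| + 1 := by
      have := abs_sub_abs_le_abs_sub v u
      rw [mem_ball, Real.dist_eq] at hv
      linarith
    exact (norm_add_le _ _).trans (by rw [norm_smul, Real.norm_eq_abs]; gcongr)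
  set K := 2 * ((∑ k, |ω k|) * (∑ i, |ωt i|)) * C * (1 + c) ^ μ'
  have hg : Integrable fun t : ℝ => K * (1 + |t|) ^ (-μ') :=
    (integrable_one_add_norm (E := ℝ) (r := μ') (by simpa using hμ')).const_mul K
  have hdom : ∀ v ∈ ball u 1, ∀ t : ℝ,
      ‖dot3 (cross3 ωt ω) (curl3 A (x + v • ωt + t • ω))‖ ≤ K * (1 + |t|) ^ (-μ') :=
    fun v hv => norm_dot3_cross3_curl3_add_smul_le hder (by linarith) hω (hyc v hv) ωt
  refine ⟨integrable_dot3_curl3_comp_add_smul hA1 hg (hdom u (mem_ball_self one_pos)), ?_⟩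
  have hω0 : ω ≠ 0 := by rintro rfl; simp at hω
  exact hasDerivAt_of_tendstoUniformlyOn isOpen_ball
    (tendstoUniformlyOn_intervalIntegral_dot3_fderiv hA1
      (tendsto_cobounded_zero_of_norm_le_rpow_neg (by linarith) hRA) hω0 ωt hyc hg hdom)
    (Eventually.of_forall fun T v _ => hasDerivAt_intervalIntegral_dot3_comp hA1 x ω ωt _ _ v)
    (fun v _ => ha _) (mem_ball_self one_pos)

/-- Differentiating the X-ray transform of `A` yields the X-ray transform of the
normal component of `B = curl A` (equation (x2)). -/
theorem statement16 (A : E3 → E3) (hA1 : ContDiff ℝ 1 A) (hAmr : IsMediumRange A)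
    (C μ' : ℝ) (hμ' : 1 < μ')
    (hder : ∀ i k : Fin 3, ∀ x : E3, |pderiv3 A i k x| ≤ C * (1 + ‖x‖) ^ (-μ'))
    (ω ωt : E3) (hω : ‖ω‖ = 1) (hωt : ‖ωt‖ = 1) (x : E3)
    (a : E3 → ℝ)
    (ha : ∀ y : E3,
      Tendsto (fun T : ℝ => ∫ t in -T..T, dot3 ω (A (y + t • ω))) atTop (𝓝 (a y))) :
    ∀ u : ℝ,
      Integrable
        (fun t : ℝ => dot3 (cross3 ωt ω) (curl3 A (x + u • ωt + t • ω))) volume ∧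
      HasDerivAt (fun v : ℝ => a (x + v • ωt))
        (∫ t : ℝ, dot3 (cross3 ωt ω) (curl3 A (x + u • ωt + t • ω))) u :=
  statement16_general A hA1 hAmr C μ' hμ' hder ω ωt hω x a ha
end
end
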